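/- arXiv:2307.16224 — 13 statements merged into one kernel-verified Lean document; each statement's English description precedes it below -/
import Mathlib

section
/- Let G be a non-zero abelian group that is not si-simple (i.e., G has at least one strongly invariant subgroup different from {0} and G). Then G is an ISI-group if and only if G has exactly one strongly invariant subgroup different from {0} and G. -/
/-- A subgroup `S` of an abelian group `G` is *strongly invariant* if every additive
homomorphism `ψ : S →+ G` maps `S` into itself. -/
def IsStronglyInvariant {G : Type*} [AddCommGroup G] (S : AddSubgroup G) : Prop :=
  ∀ (ψ : S →+ G) (s : S), (ψ s : G) ∈ S

/-- A subgroup `F` of `G` is *fully invariant* if every endomorphism of `G` maps `F` into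
itself. -/
def IsFullyInvariant {G : Type*} [AddCommGroup G] (F : AddSubgroup G) : Prop :=
  ∀ (φ : G →+ G), ∀ x ∈ F, φ x ∈ F

/-- A group is *si-simple* if its only strongly invariant subgroups are `⊥` and `⊤`. -/
def SiSimple (G : Type*) [AddCommGroup G] : Prop :=
  ∀ S : AddSubgroup G, IsStronglyInvariant S → S = ⊥ ∨ S = ⊤

/-- A non-zero group `G` is an *ISI-group* if all of its strongly invariant subgroups
different from `⊥` and `⊤` (if any) are isomorphic to one another. -/
def IsISI (G : Type*) [AddCommGroup G] : Prop :=
  Nontrivial G ∧ ∀ H F : AddSubgroup G, IsStronglyInvariant H → IsStronglyInvariant F →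
    H ≠ ⊥ → H ≠ ⊤ → F ≠ ⊥ → F ≠ ⊤ → Nonempty (H ≃+ F)

/-- A non-zero group `G` is a *strongly ISI-group* if all of its non-zero strongly invariant
subgroups are isomorphic to one another. -/
def IsStronglyISI (G : Type*) [AddCommGroup G] : Prop :=
  Nontrivial G ∧ ∀ H F : AddSubgroup G, IsStronglyInvariant H → IsStronglyInvariant F →
    H ≠ ⊥ → F ≠ ⊥ → Nonempty (H ≃+ F)

/-- A non-zero group `G` is an *IFI-group* if all of its fully invariant subgroups
different from `⊥` and `⊤` (if any) are isomorphic to one another. -/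
def IsIFI (G : Type*) [AddCommGroup G] : Prop :=
  Nontrivial G ∧ ∀ H F : AddSubgroup G, IsFullyInvariant H → IsFullyInvariant F →
    H ≠ ⊥ → H ≠ ⊤ → F ≠ ⊥ → F ≠ ⊤ → Nonempty (H ≃+ F)

/-- Multiplication by a natural number `n`, as an endomorphism of `G`. -/
def nsmulHom {G : Type*} [AddCommGroup G] (n : ℕ) : G →+ G where
  toFun x := n • x
  map_zero' := smul_zero n
  map_add' a b := smul_add n a b

/-- `H` is `n`-pure in `G` if `H ∩ nG = nH`. -/
def IsNPure {G : Type*} [AddCommGroup G] (n : ℕ) (H : AddSubgroup G) : Prop :=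
  H ⊓ (nsmulHom (G := G) n).range = H.map (nsmulHom n)

/-- `H` is a pure subgroup of `G` if `H ∩ nG = nH` for every positive natural number `n`. -/
def IsPureSubgroup {G : Type*} [AddCommGroup G] (H : AddSubgroup G) : Prop :=
  ∀ n : ℕ, 0 < n → IsNPure n H

/-- A torsion-free group is *s-irreducible* if it has no pure strongly invariant subgroups
other than `⊥` and `⊤`. -/
def SIrreducible (G : Type*) [AddCommGroup G] : Prop :=
  ∀ H : AddSubgroup G, IsPureSubgroup H → IsStronglyInvariant H → H = ⊥ ∨ H = ⊤

/-- `Hom(F,G)F = ∑_{φ ∈ Hom(F,G)} φ(F)`, the subgroup generated by all images of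
homomorphisms from `F` to `G`. -/
def homGenSub {G : Type*} [AddCommGroup G] (F : AddSubgroup G) : AddSubgroup G :=
  ⨆ φ : F →+ G, φ.range

/-- A group is divisible if `nD = D` for every positive natural number `n`. -/
def IsDivisibleGroup (G : Type*) [AddCommGroup G] : Prop :=
  ∀ n : ℕ, 0 < n → ∀ x : G, ∃ y : G, n • y = x


lemma si_iso_eq {G : Type*} [AddCommGroup G] {H F : AddSubgroup G}
    (hH : IsStronglyInvariant H) (hF : IsStronglyInvariant F) (e : H ≃+ F) : H = F := by
  apply le_antisymm
  · intro x hx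
    have := hF ((H.subtype.comp e.symm.toAddMonoidHom)) (e ⟨x, hx⟩)
    simpa using this
  · intro x hx
    have := hH ((F.subtype.comp e.toAddMonoidHom)) (e.symm ⟨x, hx⟩)
    simpa using this

/-- A non-zero, non-si-simple abelian group is an ISI-group iff it has exactly one
strongly invariant subgroup different from `⊥` and `⊤`. -/
theorem statement2 {G : Type*} [AddCommGroup G] [Nontrivial G]
    (h : ∃ S : AddSubgroup G, IsStronglyInvariant S ∧ S ≠ ⊥ ∧ S ≠ ⊤) :
    IsISI G ↔ ∃! H : AddSubgroup G, IsStronglyInvariant H ∧ H ≠ ⊥ ∧ H ≠ ⊤ := by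
  obtain ⟨S, hS, hSb, hSt⟩ := h
  constructor
  · rintro ⟨-, hiso⟩
    refine ⟨S, ⟨hS, hSb, hSt⟩, ?_⟩
    rintro H ⟨hH, hHb, hHt⟩
    obtain ⟨e⟩ := hiso H S hH hS hHb hHt hSb hSt
    exact si_iso_eq hH hS e
  · rintro ⟨U, hU, huniq⟩
    refine ⟨‹_›, fun H F hH hF hHb hHt hFb hFt => ?_⟩
    rw [huniq H ⟨hH, hHb, hHt⟩, huniq F ⟨hF, hFb, hFt⟩]
    exact ⟨AddEquiv.refl _⟩
end

section
/- A non-zero torsion abelian group G is an ISI-group if and only if there exists a prime p such that either pG = {0} or p²G = {0}. -/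
section Aux

variable {G : Type*} [AddCommGroup G]

lemma mem_nsmulKer {n : ℕ} {g : G} : g ∈ (nsmulHom (G := G) n).ker ↔ n • g = 0 :=
  Iff.rfl

lemma nsmulKer_si (n : ℕ) : IsStronglyInvariant ((nsmulHom (G := G) n).ker) := by
  intro ψ s
  have hs : n • s = 0 := by
    apply Subtype.ext
    have h : n • (s : G) = 0 := s.2
    simpa using h
  show n • (ψ s) = 0
  rw [← map_nsmul, hs, map_zero]

lemma elt_prime_order {g : G} {q : ℕ} (hq : q.Prime)
    (hdvd : q ∣ addOrderOf g) (hpos : 0 < addOrderOf g) :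
    ∃ y : G, y ≠ 0 ∧ q • y = 0 := by
  refine ⟨(addOrderOf g / q) • g, ?_, ?_⟩
  · intro h
    have h1 : addOrderOf g ∣ addOrderOf g / q := addOrderOf_dvd_iff_nsmul_eq_zero.2 h
    have hlt : addOrderOf g / q < addOrderOf g := Nat.div_lt_self hpos hq.one_lt
    have hpos' : 0 < addOrderOf g / q := Nat.div_pos (Nat.le_of_dvd hpos hdvd) hq.pos
    have := Nat.le_of_dvd hpos' h1
    omega
  · rw [← mul_nsmul, Nat.div_mul_cancel hdvd]
    exact addOrderOf_nsmul_eq_zero g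

lemma zmod_baer (n : ℕ) [NeZero n] : Module.Baer (ZMod n) (ZMod n) := by
  haveI : IsPrincipalIdealRing (ZMod n) :=
    IsPrincipalIdealRing.of_surjective (Int.castRingHom (ZMod n)) ZMod.intCast_surjective
  intro I g
  obtain ⟨a, rfl⟩ := (IsPrincipalIdealRing.principal I).principal
  have ha : a ∈ Ideal.span ({a} : Set (ZMod n)) := Ideal.mem_span_singleton_self a
  set b := g ⟨a, ha⟩ with hbdef
  set d := Nat.gcd (ZMod.val a) n with hd
  have hd_dvd_n : d ∣ n := Nat.gcd_dvd_right _ _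
  have hd_dvd_a : d ∣ a.val := Nat.gcd_dvd_left _ _
  have hn0 : 0 < n := Nat.pos_of_ne_zero (NeZero.ne n)
  have hd0 : 0 < d := Nat.gcd_pos_of_pos_right _ hn0
  have hnd0 : 0 < n / d := Nat.div_pos (Nat.le_of_dvd hn0 hd_dvd_n) hd0
  have hsmul_a : (n / d) • a = 0 := by
    rw [nsmul_eq_mul, ← ZMod.natCast_zmod_val a, ← Nat.cast_mul]
    have heq : n / d * a.val = n * (a.val / d) := by
      obtain ⟨u, hu⟩ := hd_dvd_a
      obtain ⟨v, hv⟩ := hd_dvd_n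
      rw [hu, hv, Nat.mul_div_cancel_left u hd0, Nat.mul_div_cancel_left v hd0]
      ring
    rw [heq, Nat.cast_mul, ZMod.natCast_self, zero_mul]
  have hsub : ((n / d) • (⟨a, ha⟩ : Ideal.span ({a} : Set (ZMod n)))) = 0 := by
    apply Subtype.ext
    simpa using hsmul_a
  have hb0 : (n / d) • b = 0 := by
    rw [hbdef, ← map_nsmul, hsub, map_zero]
  have hdb : d ∣ b.val := by
    have h1 : (((n / d) * b.val : ℕ) : ZMod n) = 0 := by
      push_cast
      rw [ZMod.natCast_zmod_val b, ← nsmul_eq_mul]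
      exact hb0
    have h2 : n ∣ (n / d) * b.val := (ZMod.natCast_eq_zero_iff _ _).1 h1
    obtain ⟨t, ht⟩ := h2
    have hn' : n = d * (n / d) := (Nat.mul_div_cancel' hd_dvd_n).symm
    have heq : (n / d) * b.val = (n / d) * (d * t) := by
      rw [ht]
      have hh : d * (n / d) * t = n / d * (d * t) := by ring
      rw [← hh, ← hn']
    exact ⟨t, Nat.eq_of_mul_eq_mul_left hnd0 heq⟩
  have key : a * ((Nat.gcdA a.val n : ℤ) : ZMod n) = (d : ZMod n) := by
    have hbez := Nat.gcd_eq_gcd_ab a.val n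
    have hcast : ((d : ℤ) : ZMod n)
        = ((a.val * Nat.gcdA a.val n + n * Nat.gcdB a.val n : ℤ) : ZMod n) := by
      exact_mod_cast congrArg (fun z : ℤ => ((z : ZMod n))) hbez
    push_cast at hcast
    rw [ZMod.natCast_zmod_val a, ZMod.natCast_self, zero_mul, add_zero] at hcast
    exact hcast.symm
  set c : ZMod n := ((Nat.gcdA a.val n : ℤ) : ZMod n) * ((b.val / d : ℕ) : ZMod n) with hc
  have hac : a * c = b := by
    rw [hc, ← mul_assoc, key, ← Nat.cast_mul, Nat.mul_div_cancel' hdb, ZMod.natCast_zmod_val]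
  refine ⟨LinearMap.toSpanSingleton (ZMod n) (ZMod n) c, ?_⟩
  intro x hx
  obtain ⟨t, rfl⟩ := Ideal.mem_span_singleton'.1 hx
  have hmem : (⟨t * a, hx⟩ : Ideal.span ({a} : Set (ZMod n))) = t • ⟨a, ha⟩ := by
    apply Subtype.ext
    simp [smul_eq_mul]
  rw [hmem, map_smul]
  show (t * a) • c = t • b
  rw [smul_eq_mul, smul_eq_mul, mul_assoc, hac]

lemma exists_addHom_eq_one' {n : ℕ} [NeZero n] {M : Type*} [AddCommGroup M]
    [Module (ZMod n) M] {s : M} (hs : addOrderOf s = n) :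
    ∃ f : M →+ ZMod n, f s = 1 := by
  have h0 : ∀ r : ZMod n, r • s = 0 → r = 0 := by
    intro r hr
    have h1 : ((r.val : ℕ) : ZMod n) = r := ZMod.natCast_zmod_val r
    rw [← h1, Nat.cast_smul_eq_nsmul] at hr
    have h2 : addOrderOf s ∣ r.val := addOrderOf_dvd_iff_nsmul_eq_zero.2 hr
    rw [hs] at h2
    have h3 : r.val = 0 := Nat.eq_zero_of_dvd_of_lt h2 (ZMod.val_lt r)
    rw [← h1, h3, Nat.cast_zero]
  have hinj : Function.Injective ⇑(LinearMap.toSpanSingleton (ZMod n) M s) := by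
    intro r r' h
    simp only [LinearMap.toSpanSingleton_apply] at h
    have : (r - r') • s = 0 := by rw [sub_smul, h, sub_self]
    exact sub_eq_zero.1 (h0 _ this)
  obtain ⟨F, hF⟩ := (zmod_baer n).extension_property
    (LinearMap.toSpanSingleton (ZMod n) M s) hinj LinearMap.id
  refine ⟨F.toAddMonoidHom, ?_⟩
  have h2 := LinearMap.congr_fun hF 1
  simpa [LinearMap.toSpanSingleton_apply] using h2

lemma exists_addHom_eq_one {n : ℕ} [NeZero n] {M : Type*} [AddCommGroup M]
    (hM : ∀ x : M, n • x = 0) {s : M} (hs : addOrderOf s = n) :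
    ∃ f : M →+ ZMod n, f s = 1 := by
  letI : Module (ZMod n) M := AddCommGroup.zmodModule hM
  exact exists_addHom_eq_one' hs

lemma si_subgroup_eq {p : ℕ} (hp : p.Prime)
    (h2 : ∀ g : G, p ^ 2 • g = 0) {H : AddSubgroup G} (hsi : IsStronglyInvariant H)
    (hbot : H ≠ ⊥) (htop : H ≠ ⊤) : H = (nsmulHom (G := G) p).ker := by
  haveI : NeZero p := ⟨hp.pos.ne'⟩
  haveI : NeZero (p ^ 2) := ⟨pow_ne_zero _ hp.pos.ne'⟩
  by_cases hcase : ∃ s ∈ H, p • s ≠ 0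
  · exfalso
    apply htop
    rw [AddSubgroup.eq_top_iff']
    intro g
    obtain ⟨s, hsH, hps⟩ := hcase
    have hM : ∀ x : (H : AddSubgroup G), p ^ 2 • x = 0 := by
      intro x
      apply Subtype.ext
      have := h2 (x : G)
      simpa using this
    set sM : H := ⟨s, hsH⟩ with hsM
    have hord : addOrderOf sM = p ^ 2 := by
      have hd : addOrderOf sM ∣ p ^ 2 := addOrderOf_dvd_iff_nsmul_eq_zero.2 (hM sM)
      obtain ⟨k, hk2, hke⟩ := (Nat.dvd_prime_pow hp).1 hd
      rcases Nat.lt_or_ge k 2 with h | h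
      · exfalso
        apply hps
        have hdp : addOrderOf sM ∣ p := by
          have h1 : p ^ k ∣ p ^ 1 := pow_dvd_pow p (by omega)
          rw [pow_one] at h1
          rw [hke]
          exact h1
        have h0 : p • sM = 0 := addOrderOf_dvd_iff_nsmul_eq_zero.1 hdp
        have := congrArg (Subtype.val) h0
        simpa using this
      · rw [hke]
        congr 1
        omega
    obtain ⟨f, hf⟩ := exists_addHom_eq_one hM hord
    have hgz : (zmultiplesHom G g) ((p ^ 2 : ℕ) : ℤ) = 0 := by
      have : ((p ^ 2 : ℕ) : ℤ) • g = 0 := by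
        rw [natCast_zsmul]
        exact h2 g
      simpa [zmultiplesHom_apply] using this
    set c : ZMod (p ^ 2) →+ G := ZMod.lift (p ^ 2) ⟨zmultiplesHom G g, hgz⟩ with hcdef
    have hc1 : c 1 = g := by
      have h := ZMod.lift_coe (p ^ 2) ⟨zmultiplesHom G g, hgz⟩ 1
      simpa [zmultiplesHom_apply] using h
    have hmem := hsi (c.comp f) sM
    rw [AddMonoidHom.comp_apply, hf, hc1] at hmem
    exact hmem
  · push_neg at hcase
    apply le_antisymm
    · intro x hx
      exact mem_nsmulKer.2 (hcase x hx)
    · intro g hg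
      have hg' : p • g = 0 := hg
      have hex : ∃ s ∈ H, s ≠ (0 : G) := by
        by_contra hno
        push_neg at hno
        exact hbot ((AddSubgroup.eq_bot_iff_forall H).2 hno)
      obtain ⟨s, hsH, hs0⟩ := hex
      have hM : ∀ x : (H : AddSubgroup G), p • x = 0 := by
        intro x
        apply Subtype.ext
        have := hcase (x : G) x.2
        simpa using this
      set sM : H := ⟨s, hsH⟩ with hsM
      have hsM0 : sM ≠ 0 := by
        intro h
        apply hs0
        have := congrArg (Subtype.val) h
        exact this
      have hord : addOrderOf sM = p := by
        have hd : addOrderOf sM ∣ p := addOrderOf_dvd_iff_nsmul_eq_zero.2 (hM sM)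
        rcases (Nat.dvd_prime hp).1 hd with h | h
        · exact absurd (AddMonoid.addOrderOf_eq_one_iff.1 h) hsM0
        · exact h
      obtain ⟨f, hf⟩ := exists_addHom_eq_one hM hord
      have hgz : (zmultiplesHom G g) ((p : ℕ) : ℤ) = 0 := by
        have : ((p : ℕ) : ℤ) • g = 0 := by
          rw [natCast_zsmul]
          exact hg'
        simpa [zmultiplesHom_apply] using this
      set c : ZMod p →+ G := ZMod.lift p ⟨zmultiplesHom G g, hgz⟩ with hcdef
      have hc1 : c 1 = g := by
        have h := ZMod.lift_coe p ⟨zmultiplesHom G g, hgz⟩ 1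
        simpa [zmultiplesHom_apply] using h
      have hmem := hsi (c.comp f) sM
      rw [AddMonoidHom.comp_apply, hf, hc1] at hmem
      exact hmem

end Aux

/-- A non-zero torsion abelian group is an ISI-group iff `pG = 0` or `p²G = 0` for some
prime `p`. -/
theorem statement3 {G : Type*} [AddCommGroup G] [Nontrivial G]
    (htor : AddMonoid.IsTorsion G) :
    IsISI G ↔ ∃ p : ℕ, p.Prime ∧ ((∀ g : G, p • g = 0) ∨ (∀ g : G, (p ^ 2) • g = 0)) := by
  constructor
  · intro hISI
    obtain ⟨x₀, hx₀⟩ := exists_ne (0 : G)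
    have hn : 0 < addOrderOf x₀ := (htor x₀).addOrderOf_pos
    have hn1 : addOrderOf x₀ ≠ 1 := fun h => hx₀ (AddMonoid.addOrderOf_eq_one_iff.1 h)
    set p := (addOrderOf x₀).minFac with hpdef
    have hp : p.Prime := Nat.minFac_prime hn1
    obtain ⟨x, hx0, hxp⟩ := elt_prime_order hp (Nat.minFac_dvd _) hn
    refine ⟨p, hp, Or.inr ?_⟩
    intro g
    rcases eq_or_ne g 0 with rfl | hg0
    · simp
    have hm : 0 < addOrderOf g := (htor g).addOrderOf_pos
    have hq : ∀ {q : ℕ}, q.Prime → q ∣ addOrderOf g → q = p := by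
      intro q hqp hqm
      by_contra hne
      obtain ⟨y, hy0, hyq⟩ := elt_prime_order hqp hqm hm
      have co : Nat.Coprime p q := (Nat.coprime_primes hp hqp).2 (Ne.symm hne)
      have key0 : ∀ z : G, p • z = 0 → q • z = 0 → z = 0 := by
        intro z h1 h2
        have d1 : addOrderOf z ∣ p := addOrderOf_dvd_iff_nsmul_eq_zero.2 h1
        have d2 : addOrderOf z ∣ q := addOrderOf_dvd_iff_nsmul_eq_zero.2 h2
        have : addOrderOf z ∣ 1 := co ▸ Nat.dvd_gcd d1 d2
        exact AddMonoid.addOrderOf_eq_one_iff.1 (Nat.dvd_one.1 this)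
      set Kp := (nsmulHom (G := G) p).ker with hKp
      set Kq := (nsmulHom (G := G) q).ker with hKq
      have hKpb : Kp ≠ ⊥ := by
        intro h
        exact hx0 ((AddSubgroup.eq_bot_iff_forall Kp).1 h x (mem_nsmulKer.2 hxp))
      have hKqb : Kq ≠ ⊥ := by
        intro h
        exact hy0 ((AddSubgroup.eq_bot_iff_forall Kq).1 h y (mem_nsmulKer.2 hyq))
      have hKpt : Kp ≠ ⊤ := by
        intro h
        have : y ∈ Kp := h ▸ AddSubgroup.mem_top y
        exact hy0 (key0 y (mem_nsmulKer.1 this) hyq)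
      have hKqt : Kq ≠ ⊤ := by
        intro h
        have : x ∈ Kq := h ▸ AddSubgroup.mem_top x
        exact hx0 (key0 x hxp (mem_nsmulKer.1 this))
      obtain ⟨e⟩ := hISI.2 Kp Kq (nsmulKer_si p) (nsmulKer_si q) hKpb hKpt hKqb hKqt
      set xp : Kp := ⟨x, mem_nsmulKer.2 hxp⟩ with hxpdef
      have hxp0 : xp ≠ 0 := by
        intro h
        apply hx0
        have := congrArg (Subtype.val) h
        exact this
      have h1 : p • e xp = 0 := by
        rw [← map_nsmul]
        have : p • xp = 0 := by
          apply Subtype.ext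
          simpa using hxp
        rw [this, map_zero]
      have h1' : p • ((e xp : Kq) : G) = 0 := by
        have := congrArg (Subtype.val) h1
        simpa using this
      have h2' : q • ((e xp : Kq) : G) = 0 := (e xp).2
      have : ((e xp : Kq) : G) = 0 := key0 _ h1' h2'
      have : e xp = 0 := Subtype.ext this
      exact hxp0 (by simpa using e.injective (this.trans (map_zero e).symm))
    obtain ⟨k, hk⟩ : ∃ k, addOrderOf g = p ^ k :=
      ⟨_, Nat.eq_prime_pow_of_unique_prime_dvd hm.ne' hq⟩
    have hk2 : k ≤ 2 := by
      by_contra hk3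
      push_neg at hk3
      have hppow : ∀ i j : ℕ, p ^ i ∣ p ^ j ↔ i ≤ j := fun i j =>
        Nat.pow_dvd_pow_iff_le_right hp.one_lt
      have hzero : ∀ i : ℕ, k ≤ i → p ^ i • g = 0 := by
        intro i hi
        apply addOrderOf_dvd_iff_nsmul_eq_zero.1
        rw [hk]
        exact pow_dvd_pow p hi
      have hnz : ∀ i : ℕ, i < k → p ^ i • g ≠ 0 := by
        intro i hi h
        have := addOrderOf_dvd_iff_nsmul_eq_zero.2 h
        rw [hk, hppow] at this
        omega
      set w := p ^ (k - 2) • g with hw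
      have hw2 : p ^ 2 • w = 0 := by
        rw [hw, ← mul_nsmul, ← pow_add]
        exact hzero _ (by omega)
      have hwp : p • w ≠ 0 := by
        rw [hw, ← mul_nsmul, ← pow_succ]
        exact hnz _ (by omega)
      have hx1 : p • (p ^ (k - 1) • g) = 0 := by
        rw [← mul_nsmul, ← pow_succ]
        exact hzero _ (by omega)
      have hx1ne : p ^ (k - 1) • g ≠ 0 := hnz _ (by omega)
      set K1 := (nsmulHom (G := G) p).ker with hK1
      set K2 := (nsmulHom (G := G) (p ^ 2)).ker with hK2
      have hK1b : K1 ≠ ⊥ := by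
        intro h
        exact hx1ne ((AddSubgroup.eq_bot_iff_forall K1).1 h _ (mem_nsmulKer.2 hx1))
      have hK2b : K2 ≠ ⊥ := by
        intro h
        apply hx1ne
        refine (AddSubgroup.eq_bot_iff_forall K2).1 h _ (mem_nsmulKer.2 ?_)
        rw [← mul_nsmul, ← pow_add]
        exact hzero _ (by omega)
      have hK1t : K1 ≠ ⊤ := by
        intro h
        have hmem : w ∈ K1 := by rw [h]; trivial
        exact hwp (mem_nsmulKer.1 hmem)
      have hK2t : K2 ≠ ⊤ := by
        intro h
        have hmem : g ∈ K2 := by rw [h]; trivial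
        have hgK2 : p ^ 2 • g = 0 := mem_nsmulKer.1 hmem
        have := addOrderOf_dvd_iff_nsmul_eq_zero.2 hgK2
        rw [hk, hppow] at this
        omega
      obtain ⟨e⟩ := hISI.2 K2 K1 (nsmulKer_si _) (nsmulKer_si _) hK2b hK2t hK1b hK1t
      set wM : K2 := ⟨w, mem_nsmulKer.2 hw2⟩ with hwM
      have hA : p • e wM = 0 := by
        apply Subtype.ext
        have : ((e wM : K1) : G) ∈ K1 := (e wM).2
        have hker : p • ((e wM : K1) : G) = 0 := mem_nsmulKer.1 this
        simpa using hker
      have hB : p • wM = 0 := by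
        apply e.injective
        rw [map_nsmul, hA, map_zero]
      apply hwp
      have := congrArg (Subtype.val) hB
      simpa using this
    have : addOrderOf g ∣ p ^ 2 := by
      rw [hk]
      exact pow_dvd_pow p hk2
    exact addOrderOf_dvd_iff_nsmul_eq_zero.1 this
  · rintro ⟨p, hp, hcase⟩
    have h2 : ∀ g : G, p ^ 2 • g = 0 := by
      rcases hcase with h | h
      · intro g
        simp [pow_two, mul_nsmul, h]
      · exact h
    refine ⟨inferInstance, ?_⟩
    intro H F hH hF hHb hHt hFb hFt
    rw [si_subgroup_eq hp h2 hH hHb hHt, si_subgroup_eq hp h2 hF hFb hFt]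
    exact ⟨AddEquiv.refl _⟩
end

section
/- Let G be an abelian group that is the internal direct sum G = A ⊕ B of subgroups A and B, where A and B are non-zero and A is fully invariant in G. Then G is an ISI-group if and only if A and B are both si-simple and Hom(B,A) ≠ {0}. -/
namespace SIaux
variable {G : Type*} [AddCommGroup G]

lemma mem_ti {A : AddSubgroup G} {x : G} : x ∈ AddSubgroup.toIntSubmodule A ↔ x ∈ A := Iff.rfl

/-- Projection onto `A` along `B`. -/
noncomputable def pr {A B : AddSubgroup G} (hc : IsCompl A B) : G →+ A :=
  AddMonoidHom.mk'
    (fun x => ⟨(Submodule.linearProjOfIsCompl (AddSubgroup.toIntSubmodule A)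
        (AddSubgroup.toIntSubmodule B) (AddSubgroup.toIntSubmodule.isCompl hc) x : G),
      mem_ti.mp (Submodule.linearProjOfIsCompl (AddSubgroup.toIntSubmodule A)
        (AddSubgroup.toIntSubmodule B) (AddSubgroup.toIntSubmodule.isCompl hc) x).2⟩)
    (by intro a b; apply Subtype.ext; simp)

lemma pr_left {A B : AddSubgroup G} (hc : IsCompl A B) {a : G} (ha : a ∈ A) :
    (pr hc a : G) = a := by
  have := Submodule.linearProjOfIsCompl_apply_left
    (p := AddSubgroup.toIntSubmodule A) (q := AddSubgroup.toIntSubmodule B)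
    (AddSubgroup.toIntSubmodule.isCompl hc) ⟨a, mem_ti.mpr ha⟩
  exact congrArg Subtype.val this

lemma pr_zero_iff {A B : AddSubgroup G} (hc : IsCompl A B) {x : G} :
    pr hc x = 0 ↔ x ∈ B := by
  rw [← mem_ti (A := B), ← Submodule.linearProjOfIsCompl_apply_eq_zero_iff
    (p := AddSubgroup.toIntSubmodule A) (q := AddSubgroup.toIntSubmodule B)
    (AddSubgroup.toIntSubmodule.isCompl hc) (x := x)]
  constructor
  · intro h; exact Subtype.ext (congrArg Subtype.val h)
  · intro h; exact Subtype.ext (congrArg Subtype.val h)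

lemma pr_decomp {A B : AddSubgroup G} (hc : IsCompl A B) (x : G) :
    (pr hc x : G) + (pr hc.symm x : G) = x := by
  have h1 : x - (pr hc x : G) ∈ B := by
    rw [← pr_zero_iff hc]
    have : pr hc ((pr hc x : G)) = pr hc x := Subtype.ext (pr_left hc (pr hc x).2)
    rw [map_sub, this, sub_self]
  have h2 : (pr hc.symm x : G) = x - (pr hc x : G) := by
    have ha : (pr hc x : G) ∈ A := (pr hc x).2
    have ex : (pr hc x : G) + (x - (pr hc x : G)) = x := by abel
    have e := congrArg (pr hc.symm) ex
    rw [map_add] at e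
    have z1 : pr hc.symm ((pr hc x : G)) = 0 := (pr_zero_iff hc.symm).mpr ha
    rw [z1, zero_add] at e
    rw [← e, pr_left hc.symm h1]
  rw [h2]; abel

/-- Transfer strong invariance through `map subtype`. -/
lemma map_transfer {A : AddSubgroup G} {S : AddSubgroup A} (hS : IsStronglyInvariant S)
    (θ : (S.map A.subtype) →+ A) (t : (S.map A.subtype)) :
    A.subtype (θ t) ∈ S.map A.subtype := by
  have hinj : Function.Injective A.subtype := Subtype.val_injective
  let e := S.equivMapOfInjective A.subtype hinj
  have h1 : θ (e (e.symm t)) ∈ S := hS (θ.comp e.toAddMonoidHom) (e.symm t)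
  rw [e.apply_symm_apply] at h1
  exact AddSubgroup.mem_map.mpr ⟨θ t, h1, rfl⟩

/-- Strong invariance of `A` from full invariance, given a complement. -/
lemma Asi {A B : AddSubgroup G} (hc : IsCompl A B) (hfi : IsFullyInvariant A) :
    IsStronglyInvariant A := by
  intro ψ s
  have h := hfi (ψ.comp (pr hc)) s s.2
  have hs : pr hc (s : G) = s := Subtype.ext (pr_left hc s.2)
  simpa [AddMonoidHom.comp_apply, hs] using h

/-- In an ISI group, two strongly invariant proper nonzero subgroups are equal. -/
lemma uniq (hISI : IsISI G) {H F : AddSubgroup G}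
    (hHsi : IsStronglyInvariant H) (hFsi : IsStronglyInvariant F)
    (hHb : H ≠ ⊥) (hHt : H ≠ ⊤) (hFb : F ≠ ⊥) (hFt : F ≠ ⊤) : H = F := by
  obtain ⟨φ⟩ := hISI.2 H F hHsi hFsi hHb hHt hFb hFt
  apply le_antisymm
  · intro x hx
    have h := hFsi (H.subtype.comp φ.symm.toAddMonoidHom) (φ ⟨x, hx⟩)
    simpa using h
  · intro x hx
    have h := hHsi (F.subtype.comp φ.toAddMonoidHom) (φ.symm ⟨x, hx⟩)
    simpa using h

end SIaux

namespace SIaux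
variable {G : Type*} [AddCommGroup G]

/-- Key: images of homs out of `T' = map subtype T` land in `T' ⊔ V`. -/
lemma keyA {A B : AddSubgroup G} (hc : IsCompl A B) {T : AddSubgroup A}
    (hT : IsStronglyInvariant T)
    (θ : (T.map A.subtype) →+ G) (t : (T.map A.subtype)) :
    (θ t : G) ∈ (T.map A.subtype) ⊔
      (⨆ g : (T.map A.subtype) →+ B, (g.range.map B.subtype)) := by
  have hα : A.subtype ((pr hc).comp θ t) ∈ T.map A.subtype :=
    map_transfer hT ((pr hc).comp θ) t
  have hβ : B.subtype ((pr hc.symm).comp θ t) ∈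
      (⨆ g : (T.map A.subtype) →+ B, (g.range.map B.subtype)) := by
    refine (le_iSup (fun g : (T.map A.subtype) →+ B => g.range.map B.subtype)
      ((pr hc.symm).comp θ)) ?_
    exact AddSubgroup.mem_map.mpr ⟨_, ⟨t, rfl⟩, rfl⟩
  refine AddSubgroup.mem_sup.mpr ⟨_, hα, _, hβ, ?_⟩
  exact pr_decomp hc (θ t)

lemma Wsi {A B : AddSubgroup G} (hc : IsCompl A B) {T : AddSubgroup A}
    (hT : IsStronglyInvariant T) :
    IsStronglyInvariant ((T.map A.subtype) ⊔
      (⨆ g : (T.map A.subtype) →+ B, (g.range.map B.subtype))) := by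
  set T' := T.map A.subtype with hT'def
  set V := ⨆ g : T' →+ B, (g.range.map B.subtype) with hVdef
  set W := T' ⊔ V with hWdef
  intro ψ x
  have hsub : W ≤ ((W.comap ψ).map W.subtype) := by
    apply sup_le
    · intro y hy
      refine AddSubgroup.mem_map.mpr ⟨⟨y, le_sup_left (α := AddSubgroup G) hy⟩, ?_, rfl⟩
      exact keyA hc hT (ψ.comp (AddSubgroup.inclusion (le_sup_left : T' ≤ W))) ⟨y, hy⟩
    · apply iSup_le
      intro g z hz
      obtain ⟨w, hw, rfl⟩ := AddSubgroup.mem_map.mp hz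
      obtain ⟨t, rfl⟩ := hw
      have hmemV : B.subtype (g t) ∈ V := by
        refine (le_iSup (fun g : T' →+ B => g.range.map B.subtype) g) ?_
        exact AddSubgroup.mem_map.mpr ⟨g t, ⟨t, rfl⟩, rfl⟩
      have hmemW : B.subtype (g t) ∈ W := le_sup_right (α := AddSubgroup G) hmemV
      refine AddSubgroup.mem_map.mpr ⟨⟨B.subtype (g t), hmemW⟩, ?_, rfl⟩
      have hcod : ∀ s : T', B.subtype (g s) ∈ W :=
        fun s => le_sup_right (α := AddSubgroup G)
          ((le_iSup (fun g : T' →+ B => g.range.map B.subtype) g)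
            (AddSubgroup.mem_map.mpr ⟨g s, ⟨s, rfl⟩, rfl⟩))
      exact keyA hc hT (ψ.comp ((B.subtype.comp g).codRestrict W hcod)) t
  obtain ⟨w, hw, hwx⟩ := AddSubgroup.mem_map.mp (hsub x.2)
  have hwx' : w = x := Subtype.ext hwx
  rw [← hwx']
  exact hw

lemma Xsi {A B : AddSubgroup G} (hc : IsCompl A B) (hAsi : IsStronglyInvariant A)
    {S : AddSubgroup B} (hS : IsStronglyInvariant S) :
    IsStronglyInvariant (A ⊔ S.map B.subtype) := by
  set S' := S.map B.subtype with hS'def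
  set X := A ⊔ S' with hXdef
  have key : ∀ (θ : S' →+ G) (t : S'), (θ t : G) ∈ X := by
    intro θ t
    have hα : (pr hc (θ t) : G) ∈ A := (pr hc (θ t)).2
    have hβ : B.subtype ((pr hc.symm).comp θ t) ∈ S' :=
      map_transfer hS ((pr hc.symm).comp θ) t
    refine AddSubgroup.mem_sup.mpr ⟨_, hα, _, hβ, ?_⟩
    exact pr_decomp hc (θ t)
  intro ψ x
  have hsub : X ≤ ((X.comap ψ).map X.subtype) := by
    apply sup_le
    · intro y hy
      refine AddSubgroup.mem_map.mpr ⟨⟨y, le_sup_left (α := AddSubgroup G) hy⟩, ?_, rfl⟩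
      have h := hAsi (ψ.comp (AddSubgroup.inclusion (le_sup_left : A ≤ X))) ⟨y, hy⟩
      exact le_sup_left (α := AddSubgroup G) h
    · intro y hy
      refine AddSubgroup.mem_map.mpr ⟨⟨y, le_sup_right (α := AddSubgroup G) hy⟩, ?_, rfl⟩
      exact key (ψ.comp (AddSubgroup.inclusion (le_sup_right : S' ≤ X))) ⟨y, hy⟩
  obtain ⟨w, hw, hwx⟩ := AddSubgroup.mem_map.mp (hsub x.2)
  have hwx' : w = x := Subtype.ext hwx
  rw [← hwx']
  exact hw

/-- `K ⊓ A` (as a subgroup of `A`) is strongly invariant in `A` when `K` is si in `G`. -/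
lemma infsi {A B : AddSubgroup G} (hc : IsCompl A B) {K : AddSubgroup G}
    (hK : IsStronglyInvariant K) : IsStronglyInvariant (K.addSubgroupOf A) := by
  intro ψ s
  have hmem : ∀ h : K, (pr hc (h : G) : G) ∈ K := fun h =>
    hK ((A.subtype.comp (pr hc)).comp K.subtype) h
  let ρ : K →+ K.addSubgroupOf A := AddMonoidHom.mk'
    (fun h => ⟨pr hc (h : G), AddSubgroup.mem_addSubgroupOf.mpr (hmem h)⟩)
    (by
      intro a b
      apply Subtype.ext
      show pr hc ((a + b : K) : G) = pr hc (a : G) + pr hc (b : G)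
      rw [AddSubgroup.coe_add, map_add])
  have hs0 : ((s : A) : G) ∈ K := AddSubgroup.mem_addSubgroupOf.mp s.2
  have h := hK (A.subtype.comp (ψ.comp ρ)) ⟨((s : A) : G), hs0⟩
  have hρ : ρ ⟨((s : A) : G), hs0⟩ = s :=
    Subtype.ext (Subtype.ext (pr_left hc (s : A).2))
  rw [AddMonoidHom.comp_apply, AddMonoidHom.comp_apply, hρ] at h
  exact AddSubgroup.mem_addSubgroupOf.mpr h

end SIaux


open SIaux in
/-- If `G = A ⊕ B` with `A ≠ 0 ≠ B` and `A` fully invariant in `G`, then `G` is an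
ISI-group iff `A` and `B` are si-simple and `Hom(B,A) ≠ 0`. -/
theorem statement4 {G : Type*} [AddCommGroup G] (A B : AddSubgroup G)
    (hcompl : IsCompl A B) (hA : A ≠ ⊥) (hB : B ≠ ⊥) (hfi : IsFullyInvariant A) :
    IsISI G ↔ SiSimple A ∧ SiSimple B ∧ ∃ f : B →+ A, f ≠ 0 := by
  have hAtop : A ≠ ⊤ := by
    intro h
    apply hB
    rw [← hcompl.inf_eq_bot, h, top_inf_eq]
  have hBtop : B ≠ ⊤ := by
    intro h
    apply hA
    rw [← hcompl.inf_eq_bot, h, inf_top_eq]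
  constructor
  · -- forward direction
    intro hISI
    have hAsi : IsStronglyInvariant A := Asi hcompl hfi
    refine ⟨?_, ?_, ?_⟩
    · -- SiSimple A
      intro T hT
      set T' := T.map A.subtype with hT'def
      set V := ⨆ g : T' →+ B, (g.range.map B.subtype) with hVdef
      set W := T' ⊔ V with hWdef
      have hWsi : IsStronglyInvariant W := Wsi hcompl hT
      have hT'A : T' ≤ A := by rintro _ ⟨u, hu, rfl⟩; exact u.2
      have hVB : V ≤ B := iSup_le fun g => by rintro _ ⟨u, hu, rfl⟩; exact (u : B).2
      have htop : A ≤ T' → T = ⊤ := by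
        intro h
        rw [eq_top_iff]
        rintro s -
        obtain ⟨u, hu, huv⟩ := AddSubgroup.mem_map.mp (h s.2)
        have : u = s := Subtype.ext huv
        rwa [← this]
      have hfromW : A ≤ W → A ≤ T' := by
        intro hW a ha
        obtain ⟨t, ht, v, hv, htv⟩ := AddSubgroup.mem_sup.mp (hW ha)
        have hvA : v ∈ A := by
          have hveq : v = a - t := by rw [← htv]; abel
          rw [hveq]; exact sub_mem ha (hT'A ht)
        have hv0 : v = 0 := by
          simpa using hcompl.disjoint.le_bot ⟨hvA, hVB hv⟩
        rw [← htv, hv0, add_zero]; exact ht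
      by_cases hWb : W = ⊥
      · left
        rw [eq_bot_iff]
        intro s hs
        have h1 : (s : G) ∈ T' := AddSubgroup.mem_map.mpr ⟨s, hs, rfl⟩
        have h2 : (s : G) ∈ W := le_sup_left (α := AddSubgroup G) h1
        rw [hWb] at h2
        exact AddSubgroup.mem_bot.mpr (Subtype.ext (AddSubgroup.mem_bot.mp h2))
      · by_cases hWt : W = ⊤
        · right
          exact htop (hfromW (by rw [hWt]; exact le_top))
        · right
          have hWA : W = A := uniq hISI hWsi hAsi hWb hWt hA hAtop
          exact htop (hfromW (by rw [hWA]))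
    · -- SiSimple B
      intro S hS
      set S' := S.map B.subtype with hS'def
      set X := A ⊔ S' with hXdef
      have hXsi : IsStronglyInvariant X := Xsi hcompl hAsi hS
      have hS'B : S' ≤ B := by rintro _ ⟨u, hu, rfl⟩; exact u.2
      have hXb : X ≠ ⊥ := by
        intro h
        apply hA
        rw [eq_bot_iff, ← h]
        exact le_sup_left
      by_cases hXt : X = ⊤
      · right
        rw [eq_top_iff]
        rintro s -
        have hsX : (s : G) ∈ X := by rw [hXt]; trivial
        obtain ⟨a, haA, v, hvS', hav⟩ := AddSubgroup.mem_sup.mp hsX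
        have haB : a ∈ B := by
          have haeq : a = (s : G) - v := by rw [← hav]; abel
          rw [haeq]; exact sub_mem s.2 (hS'B hvS')
        have ha0 : a = 0 := by
          simpa using hcompl.disjoint.le_bot ⟨haA, haB⟩
        have hsS' : (s : G) ∈ S' := by rw [← hav, ha0, zero_add]; exact hvS'
        obtain ⟨u, hu, huv⟩ := AddSubgroup.mem_map.mp hsS'
        have : u = s := Subtype.ext huv
        rwa [← this]
      · left
        have hXA : X = A := uniq hISI hXsi hAsi hXb hXt hA hAtop
        rw [eq_bot_iff]
        intro s hs
        have h1 : (s : G) ∈ S' := AddSubgroup.mem_map.mpr ⟨s, hs, rfl⟩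
        have h2 : (s : G) ∈ A := by rw [← hXA]; exact le_sup_right (α := AddSubgroup G) h1
        have h3 : (s : G) = 0 := by
          simpa using hcompl.disjoint.le_bot ⟨h2, hS'B h1⟩
        exact AddSubgroup.mem_bot.mpr (Subtype.ext h3)
    · -- ∃ f ≠ 0
      by_contra hnf
      push_neg at hnf
      have hBsi : IsStronglyInvariant B := by
        intro ψ b
        have h0 : (pr hcompl).comp ψ = 0 := hnf _
        have h1 : pr hcompl (ψ b) = 0 := by
          rw [← AddMonoidHom.comp_apply, h0]; rfl
        exact (pr_zero_iff hcompl).mp h1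
      have hBA : B = A := uniq hISI hBsi hAsi hB hBtop hA hAtop
      apply hA
      rw [← hcompl.inf_eq_bot, hBA, inf_idem]
  · -- backward direction
    rintro ⟨hsA, hsB, f, hf⟩
    constructor
    · by_contra hnt
      have hsub := not_nontrivial_iff_subsingleton.mp hnt
      apply hA
      ext x
      simp [Subsingleton.elim x (0 : G), A.zero_mem]
    · intro H F hHsi hFsi hHb hHt hFb hFt
      have main : ∀ K : AddSubgroup G, IsStronglyInvariant K → K ≠ ⊥ → K ≠ ⊤ → K = A := by
        intro K hK hKb hKt
        have hKA := infsi hcompl hK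
        have hKB := infsi hcompl.symm hK
        have hprA : ∀ x ∈ K, (pr hcompl x : G) ∈ K := fun x hx =>
          hK ((A.subtype.comp (pr hcompl)).comp K.subtype) ⟨x, hx⟩
        have hprB : ∀ x ∈ K, (pr hcompl.symm x : G) ∈ K := fun x hx =>
          hK ((B.subtype.comp (pr hcompl.symm)).comp K.subtype) ⟨x, hx⟩
        have hAleK : K.addSubgroupOf A = ⊤ → A ≤ K := by
          intro h a ha
          have : (⟨a, ha⟩ : A) ∈ K.addSubgroupOf A := by rw [h]; trivial
          exact AddSubgroup.mem_addSubgroupOf.mp this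
        have hBleK : K.addSubgroupOf B = ⊤ → B ≤ K := by
          intro h b hb
          have : (⟨b, hb⟩ : B) ∈ K.addSubgroupOf B := by rw [h]; trivial
          exact AddSubgroup.mem_addSubgroupOf.mp this
        have hprA0 : K.addSubgroupOf A = ⊥ → ∀ x ∈ K, (pr hcompl x : G) = 0 := by
          intro h x hx
          have m1 : pr hcompl x ∈ K.addSubgroupOf A :=
            AddSubgroup.mem_addSubgroupOf.mpr (hprA x hx)
          rw [h] at m1
          exact congrArg Subtype.val (AddSubgroup.mem_bot.mp m1)
        have hprB0 : K.addSubgroupOf B = ⊥ → ∀ x ∈ K, (pr hcompl.symm x : G) = 0 := by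
          intro h x hx
          have m1 : pr hcompl.symm x ∈ K.addSubgroupOf B :=
            AddSubgroup.mem_addSubgroupOf.mpr (hprB x hx)
          rw [h] at m1
          exact congrArg Subtype.val (AddSubgroup.mem_bot.mp m1)
        rcases hsA _ hKA with h1 | h1 <;> rcases hsB _ hKB with h2 | h2
        · -- both bot: K = ⊥
          exfalso
          apply hKb
          rw [eq_bot_iff]
          intro x hx
          have e : x = 0 := by
            rw [← pr_decomp hcompl x, hprA0 h1 x hx, hprB0 h2 x hx, add_zero]
          exact AddSubgroup.mem_bot.mpr e
        · -- K = B : contradiction with f ≠ 0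
          exfalso
          have hKeqB : K = B := by
            apply le_antisymm
            · intro x hx
              have d := pr_decomp hcompl x
              rw [hprA0 h1 x hx, zero_add] at d
              have e : x = (pr hcompl.symm x : G) := d.symm
              rw [e]; exact (pr hcompl.symm x).2
            · exact hBleK h2
          apply hf
          ext b
          have hbK : (b : G) ∈ K := by rw [hKeqB]; exact b.2
          have h := hK ((A.subtype.comp f).comp (AddSubgroup.inclusion hKeqB.le)) ⟨b, hbK⟩
          have h' : (f b : G) ∈ K := h
          have hfbK : (f b : G) ∈ B := by
            have hle : K ≤ B := hKeqB.le
            exact hle h'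
          have hfb0 : (f b : G) = 0 := by
            simpa using hcompl.disjoint.le_bot ⟨(f b).2, hfbK⟩
          simpa using Subtype.ext hfb0
        · -- K = A
          apply le_antisymm
          · intro x hx
            have d := pr_decomp hcompl x
            rw [hprB0 h2 x hx, add_zero] at d
            have e : x = (pr hcompl x : G) := d.symm
            rw [e]; exact (pr hcompl x).2
          · exact hAleK h1
        · -- both top: K = ⊤
          exfalso
          apply hKt
          rw [eq_top_iff, ← hcompl.sup_eq_top]
          exact sup_le (hAleK h1) (hBleK h2)
      have hH : H = A := main H hHsi hHb hHt
      have hF : F = A := main F hFsi hFb hFt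
      rw [hH, hF]
      exact ⟨AddEquiv.refl _⟩
end

section
/- Let G be a mixed abelian group (i.e., G is neither torsion nor torsion-free). Then G is an ISI-group if and only if there exist a prime p and subgroups T and R with G the internal direct sum T ⊕ R, where T is a non-zero elementary p-group (pT = {0}) and R is a non-zero si-simple torsion-free group with pR ≠ R. -/
namespace Statement5Aux

open AddSubgroup

variable {G : Type*} [AddCommGroup G]

theorem coe_finOrder {H : AddSubgroup G} {x : H} :
    IsOfFinAddOrder (x : G) ↔ IsOfFinAddOrder x := by
  simp_rw [isOfFinAddOrder_iff_nsmul_eq_zero]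
  constructor
  · rintro ⟨n, hn, h⟩
    exact ⟨n, hn, Subtype.ext (by simpa using h)⟩
  · rintro ⟨n, hn, h⟩
    exact ⟨n, hn, by simpa using congrArg (Subtype.val) h⟩

theorem si_torsion : IsStronglyInvariant (AddCommGroup.torsion G) := by
  intro ψ s
  have hs : IsOfFinAddOrder s := coe_finOrder.mp s.2
  exact ψ.isOfFinAddOrder hs

theorem si_pker (n : ℕ) : IsStronglyInvariant ((nsmulHom (G := G) n).ker) := by
  intro ψ s
  have h : n • (s : G) = 0 := s.2
  have hs : n • s = (0 : ((nsmulHom (G := G) n).ker)) := Subtype.ext (by simpa using h)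
  show n • (ψ s) = 0
  rw [← map_nsmul, hs, map_zero]

theorem le_homGenSub (F : AddSubgroup G) : F ≤ homGenSub F := by
  have h : (F.subtype).range = F := AddSubgroup.subtype_range F
  calc F = (F.subtype).range := h.symm
  _ ≤ homGenSub F := le_iSup (fun φ : F →+ G => φ.range) F.subtype

theorem si_homGenSub (F : AddSubgroup G) : IsStronglyInvariant (homGenSub F) := by
  intro ψ s
  obtain ⟨x, hx⟩ := s
  refine AddSubgroup.iSup_induction' (G := G) (fun φ : F →+ G => φ.range)
    (C := fun y hy => (ψ ⟨y, hy⟩ : G) ∈ homGenSub F) ?_ ?_ ?_ hx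
  · rintro φ y ⟨f, rfl⟩
    have h1 : ∀ a : F, φ a ∈ homGenSub F := fun a =>
      (le_iSup (fun φ : F →+ G => φ.range) φ) ⟨a, rfl⟩
    set χ : F →+ G := ψ.comp (φ.codRestrict (homGenSub F) h1) with hχ
    have h2 : ∀ (hy : φ f ∈ homGenSub F), ψ ⟨φ f, hy⟩ = χ f := fun _ => rfl
    show (χ f : G) ∈ homGenSub F
    exact (le_iSup (fun φ : F →+ G => φ.range) χ) (AddMonoidHom.mem_range.mpr ⟨f, rfl⟩)
  · show (ψ (0 : homGenSub F) : G) ∈ homGenSub F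
    rw [map_zero]; exact zero_mem _
  · intro x y hx hy Cx Cy
    show (ψ ((⟨x, hx⟩ : homGenSub F) + ⟨y, hy⟩) : G) ∈ homGenSub F
    rw [map_add]; exact add_mem Cx Cy

theorem elementary_of_equiv {p : ℕ} {A B : AddSubgroup G} (hB : ∀ x ∈ B, p • x = 0)
    (e : A ≃+ B) : ∀ x ∈ A, p • x = 0 := by
  intro x hx
  have h1 : p • e ⟨x, hx⟩ = 0 := Subtype.ext (by simpa using hB _ (e ⟨x, hx⟩).2)
  have h2 : e (p • (⟨x, hx⟩ : A)) = 0 := by rw [map_nsmul]; exact h1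
  have h3 : p • (⟨x, hx⟩ : A) = 0 := by
    apply e.injective; rw [h2, map_zero]
  simpa using congrArg Subtype.val h3

theorem exists_linearMap_apply_eq {k V U : Type*} [Field k] [AddCommGroup V] [Module k V]
    [AddCommGroup U] [Module k U] {v : V} (hv : v ≠ 0) (u : U) :
    ∃ f : V →ₗ[k] U, f v = u := by
  obtain ⟨C, hC⟩ := Submodule.exists_isCompl (k ∙ v)
  set π := Submodule.linearProjOfIsCompl _ C hC with hπ
  set e := (LinearEquiv.toSpanNonzeroSingleton k V v hv).symm with he
  refine ⟨(LinearMap.toSpanSingleton k U u).comp ((e : (k ∙ v) →ₗ[k] k).comp π), ?_⟩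
  have h1 : π v = ⟨v, Submodule.mem_span_singleton_self v⟩ :=
    Submodule.linearProjOfIsCompl_apply_left hC ⟨v, Submodule.mem_span_singleton_self v⟩
  rw [LinearMap.comp_apply, LinearMap.comp_apply, h1]
  have h2 : (e ⟨v, Submodule.mem_span_singleton_self v⟩ : k) = 1 :=
    LinearEquiv.coord_self k V v hv
  rw [LinearEquiv.coe_coe, h2]
  simp [LinearMap.toSpanSingleton_apply]

theorem exists_addHom_of_elementary {p : ℕ} [Fact p.Prime] {M N : Type*} [AddCommGroup M]
    [AddCommGroup N] (hM : ∀ x : M, p • x = 0) (hN : ∀ x : N, p • x = 0)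
    {a : M} (ha : a ≠ 0) (t : N) : ∃ ψ : M →+ N, ψ a = t := by
  letI : Module (ZMod p) M := AddCommGroup.zmodModule hM
  letI : Module (ZMod p) N := AddCommGroup.zmodModule hN
  obtain ⟨f, hf⟩ := exists_linearMap_apply_eq (k := ZMod p) ha t
  exact ⟨f.toAddMonoidHom, hf⟩

theorem exists_proj {T R : AddSubgroup G} (hc : IsCompl T R) :
    ∃ π : G →+ G, (∀ x, π x ∈ T) ∧ (∀ x, x - π x ∈ R) ∧
      (∀ x ∈ T, π x = x) ∧ (∀ x ∈ R, π x = 0) := by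
  set T' := AddSubgroup.toIntSubmodule (M := G) T with hT'
  set R' := AddSubgroup.toIntSubmodule (M := G) R with hR'
  have hc' : IsCompl T' R' := (AddSubgroup.toIntSubmodule (M := G)).isCompl hc
  set prj := T'.projectionOnto R' hc' with hprj
  refine ⟨(T'.subtype.comp prj).toAddMonoidHom, fun x => (prj x).2, fun x => ?_, fun x hx => ?_,
    fun x hx => ?_⟩
  · have h := Submodule.projection_add_projection_eq_self hc' x
    have h2 : x - ((T'.subtype.comp prj).toAddMonoidHom x) =
        (R'.projectionOnto T' hc'.symm x : G) := by
      show x - (prj x : G) = _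
      exact (eq_sub_of_add_eq' h).symm
    rw [h2]
    exact (R'.projectionOnto T' hc'.symm x).2
  · exact congrArg Subtype.val (Submodule.projectionOnto_apply_left hc' ⟨x, hx⟩)
  · show (prj x : G) = 0
    rw [Submodule.projectionOnto_apply_of_mem_right hc' hx]
    rfl

set_option maxHeartbeats 1000000 in
theorem forward (hnt : ¬ AddMonoid.IsTorsion G) (hntf : ¬ (∀ g : G, g ≠ 0 → ¬ IsOfFinAddOrder g))
    (h : IsISI G) :
    ∃ (p : ℕ) (T R : AddSubgroup G), p.Prime ∧ IsCompl T R ∧ T ≠ ⊥ ∧ R ≠ ⊥ ∧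
      (∀ x ∈ T, p • x = 0) ∧ (∀ g : R, g ≠ 0 → ¬ IsOfFinAddOrder g) ∧ SiSimple R ∧
      ¬ (∀ x ∈ R, ∃ y ∈ R, p • y = x) := by
  obtain ⟨hnontriv, hiso⟩ := h
  set T := AddCommGroup.torsion G with hTdef
  have hTsi : IsStronglyInvariant T := si_torsion
  have hTtop : T ≠ ⊤ := by
    intro h
    refine hnt fun g => (AddCommGroup.mem_torsion g).mp ?_
    have : g ∈ T := by rw [h]; exact AddSubgroup.mem_top g
    exact this
  obtain ⟨g0, hg0ne, hg0⟩ : ∃ g : G, g ≠ 0 ∧ IsOfFinAddOrder g := by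
    by_contra hcon; push_neg at hcon
    exact hntf fun g hg => hcon g hg
  have hg0T : g0 ∈ T := (AddCommGroup.mem_torsion g0).mpr hg0
  have hTbot : T ≠ ⊥ := by
    intro h
    rw [h, AddSubgroup.mem_bot] at hg0T
    exact hg0ne hg0T
  set n := addOrderOf g0 with hn
  have hnpos : 0 < n := hg0.addOrderOf_pos
  have hn1 : n ≠ 1 := fun hh => hg0ne (AddMonoid.addOrderOf_eq_one_iff.mp hh)
  set p := n.minFac with hpdef
  have hp : p.Prime := Nat.minFac_prime hn1
  haveI : Fact p.Prime := ⟨hp⟩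
  have hpd : p ∣ n := Nat.minFac_dvd n
  set Kp := (nsmulHom (G := G) p).ker with hKpdef
  have hKsi : IsStronglyInvariant Kp := si_pker p
  set t1 := (n / p) • g0 with ht1def
  have ht1ne : t1 ≠ 0 := by
    have hlt : n / p < n := Nat.div_lt_self hnpos hp.one_lt
    have hpos : 0 < n / p := Nat.div_pos (Nat.le_of_dvd hnpos hpd) hp.pos
    exact nsmul_ne_zero_of_lt_addOrderOf hpos.ne' hlt
  have ht1K : t1 ∈ Kp := by
    show p • t1 = 0
    rw [ht1def, ← mul_nsmul, Nat.div_mul_cancel hpd]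
    exact addOrderOf_nsmul_eq_zero g0
  have hKbot : Kp ≠ ⊥ := by
    intro h
    rw [h, AddSubgroup.mem_bot] at ht1K
    exact ht1ne ht1K
  have hKleT : Kp ≤ T := fun x hx =>
    (AddCommGroup.mem_torsion x).mpr (isOfFinAddOrder_iff_nsmul_eq_zero.mpr ⟨p, hp.pos, hx⟩)
  have hKtop : Kp ≠ ⊤ := fun h => hTtop (top_le_iff.mp (h ▸ hKleT))
  obtain ⟨e⟩ := hiso T Kp hTsi hKsi hTbot hTtop hKbot hKtop
  have hpT : ∀ x ∈ T, p • x = 0 := by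
    have hKel : ∀ x ∈ Kp, p • x = 0 := fun x hx => hx
    exact elementary_of_equiv hKel e
  have hTK : T = Kp := le_antisymm (fun x hx => hpT x hx) hKleT
  have hTp : ∀ x : G, p • x ∈ T → p • x = 0 := by
    intro x hx
    rw [hTK] at hx
    have h1 : p • (p • x) = 0 := hx
    have hfin : IsOfFinAddOrder x := isOfFinAddOrder_iff_nsmul_eq_zero.mpr
      ⟨p * p, Nat.mul_pos hp.pos hp.pos, by rw [mul_nsmul]; exact h1⟩
    exact hpT x ((AddCommGroup.mem_torsion x).mpr hfin)
  -- Zorn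
  set SS : Set (AddSubgroup G) := {R | (∀ x : G, p • x ∈ R) ∧ R ⊓ T = ⊥} with hSSdef
  have hrange : (nsmulHom (G := G) p).range ∈ SS := by
    constructor
    · exact fun x => ⟨x, rfl⟩
    · rw [eq_bot_iff]
      rintro y ⟨⟨x, rfl⟩, hyT⟩
      have h0 : p • x = 0 := hTp x hyT
      exact AddSubgroup.mem_bot.mpr h0
  have hchain : ∀ c ⊆ SS, IsChain (· ≤ ·) c → ∀ y ∈ c, ∃ ub ∈ SS, ∀ z ∈ c, z ≤ ub := by
    intro c hcS hc y hyc
    refine ⟨sSup c, ⟨fun x => (le_sSup hyc) ((hcS hyc).1 x), ?_⟩, fun z hz => le_sSup hz⟩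
    rw [eq_bot_iff]
    rintro w ⟨hwS, hwT⟩
    obtain ⟨z, hzc, hwz⟩ := (AddSubgroup.mem_sSup_of_directedOn ⟨y, hyc⟩ hc.directedOn).mp hwS
    have hmem : w ∈ z ⊓ T := ⟨hwz, hwT⟩
    rw [(hcS hzc).2] at hmem
    exact hmem
  obtain ⟨R, hRge, hRmax⟩ := zorn_le_nonempty₀ SS hchain _ hrange
  have hRS : (∀ x : G, p • x ∈ R) ∧ R ⊓ T = ⊥ := hRmax.1
  have hsup : T ⊔ R = ⊤ := by
    by_contra hne
    obtain ⟨x, hxnot⟩ : ∃ x : G, x ∉ T ⊔ R := by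
      by_contra hcon; push_neg at hcon
      exact hne (eq_top_iff.mpr fun y _ => hcon y)
    set R' := R ⊔ AddSubgroup.zmultiples x with hR'def
    have hR'S : R' ∈ SS := by
      constructor
      · exact fun y => AddSubgroup.mem_sup_left (hRS.1 y)
      · rw [eq_bot_iff]
        rintro w ⟨hwR', hwT⟩
        obtain ⟨r, hr, z, hz, hrz⟩ := AddSubgroup.mem_sup.mp hwR'
        obtain ⟨m, hm⟩ := AddSubgroup.mem_zmultiples_iff.mp hz
        by_cases hdvd : (p : ℤ) ∣ m
        · obtain ⟨cc, rfl⟩ := hdvd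
          have hzR : z ∈ R := by
            rw [← hm, mul_comm, mul_smul]
            have hpx : (p : ℤ) • x ∈ R := by rw [natCast_zsmul]; exact hRS.1 x
            exact AddSubgroup.zsmul_mem R hpx cc
          have hmem : w ∈ R ⊓ T := ⟨by rw [← hrz]; exact add_mem hr hzR, hwT⟩
          rw [hRS.2] at hmem
          exact hmem
        · exfalso
          have hndvd : ¬ p ∣ m.natAbs := fun hd => hdvd (Int.natCast_dvd.mpr hd)
          have hgcd : Int.gcd (p : ℤ) m = 1 := by
            have : Nat.Coprime p m.natAbs := (hp.coprime_iff_not_dvd).mpr hndvd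
            simpa [Int.gcd] using this
          obtain ⟨a, b, hab⟩ := Int.isCoprime_iff_gcd_eq_one.mpr hgcd
          have hzTR : z ∈ T ⊔ R := by
            have : z = w - r := by rw [← hrz]; abel
            rw [this]
            exact sub_mem (AddSubgroup.mem_sup_left hwT) (AddSubgroup.mem_sup_right hr)
          have hx1 : (1 : ℤ) • x ∈ T ⊔ R := by
            rw [← hab, add_zsmul]
            apply add_mem
            · rw [mul_smul, natCast_zsmul]
              exact AddSubgroup.zsmul_mem _ (AddSubgroup.mem_sup_right (hRS.1 x)) a
            · rw [mul_smul, hm]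
              exact AddSubgroup.zsmul_mem _ hzTR b
          rw [one_zsmul] at hx1
          exact hxnot hx1
    have hle : R' ≤ R := hRmax.2 hR'S le_sup_left
    exact hxnot (AddSubgroup.mem_sup_right (hle
      (AddSubgroup.mem_sup_right (AddSubgroup.mem_zmultiples x))))
  have hinf : R ⊓ T = ⊥ := hRS.2
  have hdisj : Disjoint T R := disjoint_iff.mpr (by rw [inf_comm]; exact hinf)
  have hcompl : IsCompl T R := ⟨hdisj, codisjoint_iff.mpr hsup⟩
  have hRbot : R ≠ ⊥ := by
    intro h
    rw [h, sup_bot_eq] at hsup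
    exact hTtop hsup
  have hRtf : (∀ g : R, g ≠ 0 → ¬ IsOfFinAddOrder g) := by
    intro g hg hfin
    have h1 : (g : G) ∈ T := (AddCommGroup.mem_torsion _).mpr (coe_finOrder.mpr hfin)
    have h2 : (g : G) ∈ R ⊓ T := ⟨g.2, h1⟩
    rw [hinf, AddSubgroup.mem_bot] at h2
    exact hg (Subtype.ext h2)
  obtain ⟨πT, hπmemT, hπmemR, hπleft, hπright⟩ := exists_proj hcompl
  have hRsimple : SiSimple ↥R := by
    intro S hSsi
    set B := S.map R.subtype with hBdef
    have hBle : B ≤ R := by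
      rintro _ ⟨b, hbS, rfl⟩
      exact b.2
    have hBmem : ∀ u : S, ((u : ↥R) : G) ∈ T ⊔ B :=
      fun u => AddSubgroup.mem_sup_right (AddSubgroup.mem_map.mpr ⟨u.1, u.2, rfl⟩)
    set χ0 : ↥S →+ ↥(T ⊔ B) :=
      { toFun := fun u => ⟨((u : ↥R) : G), hBmem u⟩
        map_zero' := rfl
        map_add' := fun u v => rfl } with hχ0
    have hTBsi : IsStronglyInvariant (T ⊔ B) := by
      intro ψ s
      obtain ⟨t, ht, b, hb, hs⟩ := AddSubgroup.mem_sup.mp s.2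
      have hb2 := hb
      obtain ⟨v, hvS, hvb⟩ := hb2
      set sT : ↥(T ⊔ B) := ⟨t, AddSubgroup.mem_sup_left ht⟩ with hsTdef
      set sB : ↥(T ⊔ B) := ⟨b, AddSubgroup.mem_sup_right hb⟩ with hsBdef
      have hsum : s = sT + sB := Subtype.ext (by rw [hsTdef, hsBdef]; exact hs.symm)
      set χ1 : ↥S →+ ↥R :=
        { toFun := fun u => ⟨ψ (χ0 u) - πT (ψ (χ0 u)), hπmemR _⟩
          map_zero' := Subtype.ext (by simp)
          map_add' := fun u v => Subtype.ext (by
            push_cast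
            rw [map_add, map_add, map_add]
            abel) } with hχ1
      have hχ1S : χ1 ⟨v, hvS⟩ ∈ S := hSsi χ1 ⟨v, hvS⟩
      have hχ0v : χ0 ⟨v, hvS⟩ = sB := Subtype.ext hvb
      have hψs : (ψ s : G) = ψ sT + ψ sB := by rw [hsum, map_add]
      have hψsB : (ψ sB : G) = πT (ψ sB) + ((χ1 ⟨v, hvS⟩ : ↥R) : G) := by
        have hc : ((χ1 ⟨v, hvS⟩ : ↥R) : G) = ψ (χ0 ⟨v, hvS⟩) - πT (ψ (χ0 ⟨v, hvS⟩)) := rfl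
        rw [hc, hχ0v]
        abel
      have h1 : ψ sT ∈ T := by
        have hfin : IsOfFinAddOrder sT := coe_finOrder.mp ((AddCommGroup.mem_torsion t).mp ht)
        exact (AddCommGroup.mem_torsion _).mpr (ψ.isOfFinAddOrder hfin)
      have h2 : πT (ψ sB) ∈ T := hπmemT _
      have h3 : ((χ1 ⟨v, hvS⟩ : ↥R) : G) ∈ B := AddSubgroup.mem_map.mpr ⟨χ1 ⟨v, hvS⟩, hχ1S, rfl⟩
      rw [hψs, hψsB]
      exact add_mem (AddSubgroup.mem_sup_left h1)
        (add_mem (AddSubgroup.mem_sup_left h2) (AddSubgroup.mem_sup_right h3))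
    by_cases htop : T ⊔ B = ⊤
    · right
      rw [eq_top_iff]
      rintro u -
      have hu : (u : G) ∈ T ⊔ B := htop ▸ AddSubgroup.mem_top _
      obtain ⟨t, ht, b, hb, hs⟩ := AddSubgroup.mem_sup.mp hu
      have hbR : b ∈ R := hBle hb
      have huR : (u : G) ∈ R := u.2
      have ht0 : t = 0 := by
        have htR : t ∈ R := by
          have he : t = (u : G) - b := by rw [← hs]; abel
          rw [he]; exact sub_mem huR hbR
        have hmem : t ∈ R ⊓ T := ⟨htR, ht⟩
        rwa [hinf, AddSubgroup.mem_bot] at hmem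
      have hub : (u : G) = b := by rw [← hs, ht0, zero_add]
      obtain ⟨v, hvS, hvb⟩ := hb
      have hveq : v = u := Subtype.ext (hvb.trans hub.symm)
      rwa [← hveq]
    · left
      have hTBbot : T ⊔ B ≠ ⊥ := fun hh => hTbot (le_bot_iff.mp (hh ▸ le_sup_left))
      have hel : ∀ y ∈ T ⊔ B, p • y = 0 := by
        by_cases hTBT : T ⊔ B = T
        · intro y hy; exact hpT y (hTBT ▸ hy)
        · obtain ⟨e2⟩ := hiso (T ⊔ B) T hTBsi hTsi hTBbot htop hTbot hTtop
          exact elementary_of_equiv hpT e2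
      rw [eq_bot_iff]
      intro u huS
      have hbB : ((u : ↥R) : G) ∈ B := AddSubgroup.mem_map.mpr ⟨u, huS, rfl⟩
      have h1 : p • ((u : ↥R) : G) = 0 := hel _ (AddSubgroup.mem_sup_right hbB)
      have h2 : ((u : ↥R) : G) ∈ T := by rw [hTK]; exact h1
      have h3 : ((u : ↥R) : G) ∈ R ⊓ T := ⟨(u : ↥R).2, h2⟩
      rw [hinf, AddSubgroup.mem_bot] at h3
      exact AddSubgroup.mem_bot.mpr (Subtype.ext h3)
  have hRnd : ¬ (∀ x ∈ R, ∃ y ∈ R, p • y = x) := by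
    intro hdvd
    have hsi2 := si_homGenSub R
    have hle2 := le_homGenSub R
    have hdivS : ∀ x ∈ homGenSub R, ∃ y ∈ homGenSub R, p • y = x := by
      intro x hx
      refine AddSubgroup.iSup_induction' (G := G) (fun φ : ↥R →+ G => φ.range)
        (C := fun z _ => ∃ y ∈ homGenSub R, p • y = z) ?_ ?_ ?_ hx
      · rintro φ z ⟨r, rfl⟩
        obtain ⟨y, hyR, hy⟩ := hdvd (r : G) r.2
        refine ⟨φ ⟨y, hyR⟩, (le_iSup (fun φ : ↥R →+ G => φ.range) φ) ⟨_, rfl⟩, ?_⟩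
        rw [← map_nsmul]
        congr 1
        exact Subtype.ext hy
      · exact ⟨0, zero_mem _, smul_zero _⟩
      · rintro z w hz hw ⟨a, ha, rfl⟩ ⟨b, hb, rfl⟩
        exact ⟨a + b, add_mem ha hb, smul_add _ _ _⟩
    by_cases htop : homGenSub R = ⊤
    · obtain ⟨y, -, hy⟩ := hdivS t1 (htop ▸ AddSubgroup.mem_top _)
      have h1 : p • t1 = 0 := ht1K
      have hyfin : IsOfFinAddOrder y := isOfFinAddOrder_iff_nsmul_eq_zero.mpr
        ⟨p * p, Nat.mul_pos hp.pos hp.pos, by rw [mul_nsmul, hy]; exact h1⟩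
      have hyT : y ∈ T := (AddCommGroup.mem_torsion y).mpr hyfin
      have h0 : p • y = 0 := hpT y hyT
      rw [h0] at hy
      exact ht1ne hy.symm
    · have hbot : homGenSub R ≠ ⊥ := by
        intro hh
        exact hRbot (le_bot_iff.mp (hh ▸ hle2))
      have hel : ∀ y ∈ homGenSub R, p • y = 0 := by
        by_cases hTB : homGenSub R = T
        · intro y hy; exact hpT y (hTB ▸ hy)
        · obtain ⟨e2⟩ := hiso (homGenSub R) T hsi2 hTsi hbot htop hTbot hTtop
          exact elementary_of_equiv hpT e2
      apply hbot
      rw [eq_bot_iff]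
      intro z hz
      obtain ⟨y, hyS, hy⟩ := hdivS z hz
      rw [AddSubgroup.mem_bot, ← hy]
      exact hel y hyS
  exact ⟨p, T, R, hp, hcompl, hTbot, hRbot, hpT, hRtf, hRsimple, hRnd⟩


set_option maxHeartbeats 1000000 in
theorem backward {p : ℕ} {T R : AddSubgroup G} (hp : p.Prime) (hcompl : IsCompl T R)
    (hTbot : T ≠ ⊥) (hRbot : R ≠ ⊥) (hpT : ∀ x ∈ T, p • x = 0)
    (hRtf : (∀ g : R, g ≠ 0 → ¬ IsOfFinAddOrder g)) (hRsi : SiSimple ↥R)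
    (hRnd : ¬ (∀ x ∈ R, ∃ y ∈ R, p • y = x)) : IsISI G := by
  haveI : Fact p.Prime := ⟨hp⟩
  obtain ⟨t0, ht0T, ht0⟩ : ∃ t ∈ T, t ≠ 0 := by
    by_contra hcon; push_neg at hcon
    exact hTbot (eq_bot_iff.mpr fun x hx => AddSubgroup.mem_bot.mpr (hcon x hx))
  have hnontrivial : Nontrivial G := ⟨⟨t0, 0, ht0⟩⟩
  obtain ⟨πT, hπmemT, hπmemR, hπleft, hπright⟩ := exists_proj hcompl
  have hinfTR : T ⊓ R = ⊥ := disjoint_iff.mp hcompl.disjoint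
  have hTel : ∀ x : ↥T, p • x = 0 := fun x => Subtype.ext (by simpa using hpT x x.2)
  have hkey : ∀ H : AddSubgroup G, IsStronglyInvariant H → H ≠ ⊥ → H ≠ ⊤ → H = T := by
    intro H hHsi hHbot hHtop
    have hπTH : ∀ h ∈ H, πT h ∈ H := by
      intro h hh
      exact hHsi (πT.comp H.subtype) ⟨h, hh⟩
    set A := H ⊓ T with hAdef
    set B := H ⊓ R with hBdef
    have hmemA : ∀ h ∈ H, πT h ∈ A := fun h hh =>
      AddSubgroup.mem_inf.mpr ⟨hπTH h hh, hπmemT h⟩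
    have hmemB : ∀ h ∈ H, h - πT h ∈ B := fun h hh =>
      AddSubgroup.mem_inf.mpr ⟨sub_mem hh (hπTH h hh), hπmemR h⟩
    have hAcase : A = ⊥ ∨ A = T := by
      by_contra hcon
      push_neg at hcon
      obtain ⟨hAbot, hAT⟩ := hcon
      obtain ⟨a, haA, ha0⟩ : ∃ a ∈ A, a ≠ 0 := by
        by_contra hcon2; push_neg at hcon2
        exact hAbot (eq_bot_iff.mpr fun x hx => AddSubgroup.mem_bot.mpr (hcon2 x hx))
      obtain ⟨t, htT, htA⟩ : ∃ t ∈ T, t ∉ A := by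
        by_contra hcon2; push_neg at hcon2
        exact hAT (le_antisymm inf_le_right hcon2)
      have haH : a ∈ H := (AddSubgroup.mem_inf.mp haA).1
      have haT : a ∈ T := (AddSubgroup.mem_inf.mp haA).2
      have hAel : ∀ x : ↥A, p • x = 0 := fun x =>
        Subtype.ext (by simpa using hpT x (AddSubgroup.mem_inf.mp x.2).2)
      have ha0' : (⟨a, haA⟩ : ↥A) ≠ 0 := fun hz => ha0 (by simpa using congrArg Subtype.val hz)
      obtain ⟨ψ0, hψ0⟩ := exists_addHom_of_elementary (p := p) hAel hTel ha0' (⟨t, htT⟩ : ↥T)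
      set ρ : ↥H →+ ↥A :=
        { toFun := fun h => ⟨πT h, hmemA h h.2⟩
          map_zero' := Subtype.ext (by simp)
          map_add' := fun x y => Subtype.ext (by push_cast; rw [map_add]) } with hρ
      set ψ : ↥H →+ G := (T.subtype.comp ψ0).comp ρ with hψ
      have key := hHsi ψ ⟨a, haH⟩
      have hρa : ρ ⟨a, haH⟩ = ⟨a, haA⟩ := Subtype.ext (hπleft a haT)
      have hval : (ψ ⟨a, haH⟩ : G) = t := by
        show (T.subtype (ψ0 (ρ ⟨a, haH⟩)) : G) = t
        rw [hρa, hψ0]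
        rfl
      rw [hval] at key
      exact htA (AddSubgroup.mem_inf.mpr ⟨key, htT⟩)
    have hBcase : B = ⊥ ∨ B = R := by
      set S : AddSubgroup ↥R := B.comap R.subtype with hSdef
      have hSsi : IsStronglyInvariant S := by
        intro ψ s
        set ρ2 : ↥H →+ ↥S :=
          { toFun := fun h => ⟨⟨(h : G) - πT h, (AddSubgroup.mem_inf.mp (hmemB h h.2)).2⟩,
              hmemB h h.2⟩
            map_zero' := by
              apply Subtype.ext; apply Subtype.ext; simp
            map_add' := fun x y => by
              apply Subtype.ext; apply Subtype.ext
              push_cast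
              rw [map_add]
              abel } with hρ2
        set χ : ↥H →+ G := R.subtype.comp (ψ.comp ρ2) with hχ
        have hsB : ((s : ↥R) : G) ∈ B := s.2
        have hsH : ((s : ↥R) : G) ∈ H := (AddSubgroup.mem_inf.mp hsB).1
        have hρ2s : ρ2 ⟨((s : ↥R) : G), hsH⟩ = s := by
          apply Subtype.ext; apply Subtype.ext
          show ((s : ↥R) : G) - πT ((s : ↥R) : G) = ((s : ↥R) : G)
          rw [hπright _ (s : ↥R).2, sub_zero]
        have key := hHsi χ ⟨((s : ↥R) : G), hsH⟩
        have hχval : (χ ⟨((s : ↥R) : G), hsH⟩ : G) = ((ψ s : ↥R) : G) := by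
          show (R.subtype (ψ (ρ2 ⟨((s : ↥R) : G), hsH⟩)) : G) = _
          rw [hρ2s]
          rfl
        rw [hχval] at key
        exact AddSubgroup.mem_inf.mpr ⟨key, (ψ s : ↥R).2⟩
      rcases hRsi S hSsi with h | h
      · left
        rw [eq_bot_iff]
        intro b hbB
        have hbR : b ∈ R := (AddSubgroup.mem_inf.mp hbB).2
        have hmem : (⟨b, hbR⟩ : ↥R) ∈ S := hbB
        rw [h, AddSubgroup.mem_bot] at hmem
        exact AddSubgroup.mem_bot.mpr (by simpa using congrArg Subtype.val hmem)
      · right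
        refine le_antisymm inf_le_right fun r hrR => ?_
        have hmem : (⟨r, hrR⟩ : ↥R) ∈ S := by rw [h]; exact AddSubgroup.mem_top _
        exact hmem
    rcases hAcase with hA | hA <;> rcases hBcase with hB | hB
    · exfalso; apply hHbot
      rw [eq_bot_iff]; intro h hh
      have h1 : πT h = 0 := by
        have hm := hmemA h hh; rw [hA, AddSubgroup.mem_bot] at hm; exact hm
      have h2 : h - πT h = 0 := by
        have hm := hmemB h hh; rw [hB, AddSubgroup.mem_bot] at hm; exact hm
      rw [h1, sub_zero] at h2
      exact AddSubgroup.mem_bot.mpr h2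
    · exfalso
      have hHR : H = R := by
        apply le_antisymm
        · intro h hh
          have h1 : πT h = 0 := by
            have hm := hmemA h hh; rw [hA, AddSubgroup.mem_bot] at hm; exact hm
          have h2 : h - πT h ∈ R := (AddSubgroup.mem_inf.mp (hmemB h hh)).2
          rwa [h1, sub_zero] at h2
        · exact hB ▸ inf_le_left
      obtain ⟨x, hxR, hxnd⟩ : ∃ x ∈ R, ¬∃ y ∈ R, p • y = x := by
        by_contra hcon; push_neg at hcon
        exact hRnd hcon
      set pM := (nsmulHom (G := ↥R) p).range with hpMdef
      have hQel : ∀ q : ↥R ⧸ pM, p • q = 0 := by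
        intro q
        refine QuotientAddGroup.induction_on q (fun m => ?_)
        rw [← QuotientAddGroup.mk_nsmul]
        exact (QuotientAddGroup.eq_zero_iff _).mpr ⟨m, rfl⟩
      have hxbar : ((QuotientAddGroup.mk (⟨x, hxR⟩ : ↥R)) : ↥R ⧸ pM) ≠ 0 := by
        intro hq
        obtain ⟨y, hy⟩ := (QuotientAddGroup.eq_zero_iff _).mp hq
        exact hxnd ⟨(y : G), y.2, by simpa [nsmulHom] using congrArg Subtype.val hy⟩
      obtain ⟨f, hf⟩ := exists_addHom_of_elementary (p := p) hQel hTel hxbar (⟨t0, ht0T⟩ : ↥T)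
      set ψR : ↥R →+ G := (T.subtype.comp f).comp (QuotientAddGroup.mk' pM) with hψRdef
      have hRsi' : IsStronglyInvariant R := hHR ▸ hHsi
      have key := hRsi' ψR ⟨x, hxR⟩
      have hval : (ψR ⟨x, hxR⟩ : G) = t0 := by
        show (T.subtype (f (QuotientAddGroup.mk' pM ⟨x, hxR⟩)) : G) = t0
        have hmk : QuotientAddGroup.mk' pM ⟨x, hxR⟩ =
            ((QuotientAddGroup.mk (⟨x, hxR⟩ : ↥R)) : ↥R ⧸ pM) := rfl
        rw [hmk, hf]
        rfl
      rw [hval] at key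
      have hmem : t0 ∈ T ⊓ R := AddSubgroup.mem_inf.mpr ⟨ht0T, key⟩
      rw [hinfTR, AddSubgroup.mem_bot] at hmem
      exact ht0 hmem
    · apply le_antisymm
      · intro h hh
        have h2 : h - πT h = 0 := by
          have hm := hmemB h hh; rw [hB, AddSubgroup.mem_bot] at hm; exact hm
        have h1 : h = πT h := by rwa [sub_eq_zero] at h2
        rw [h1]; exact hπmemT h
      · exact hA ▸ inf_le_left
    · exfalso; apply hHtop
      rw [eq_top_iff]
      intro g _
      have h1 : πT g ∈ H := by
        have hm : πT g ∈ T := hπmemT g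
        rw [← hA] at hm
        exact (AddSubgroup.mem_inf.mp hm).1
      have h2 : g - πT g ∈ H := by
        have hm : g - πT g ∈ R := hπmemR g
        rw [← hB] at hm
        exact (AddSubgroup.mem_inf.mp hm).1
      have hsum : πT g + (g - πT g) = g := by abel
      rw [← hsum]; exact add_mem h1 h2
  refine ⟨hnontrivial, fun H F hH hF hHb hHt hFb hFt => ?_⟩
  rw [hkey H hH hHb hHt, hkey F hF hFb hFt]
  exact ⟨AddEquiv.refl _⟩


end Statement5Aux

/-- A mixed abelian group `G` is an ISI-group iff `G = T ⊕ R` where `T ≠ 0` is an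
elementary `p`-group and `R ≠ 0` is a si-simple torsion-free group with `pR ≠ R`. -/
theorem statement5 {G : Type*} [AddCommGroup G]
    (hnt : ¬ AddMonoid.IsTorsion G) (hntf : ¬ (∀ g : G, g ≠ 0 → ¬ IsOfFinAddOrder g)) :
    IsISI G ↔ ∃ (p : ℕ) (T R : AddSubgroup G), p.Prime ∧ IsCompl T R ∧ T ≠ ⊥ ∧ R ≠ ⊥ ∧
      (∀ x ∈ T, p • x = 0) ∧ (∀ g : R, g ≠ 0 → ¬ IsOfFinAddOrder g) ∧ SiSimple R ∧
      ¬ (∀ x ∈ R, ∃ y ∈ R, p • y = x) := by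
  constructor
  · intro h
    exact Statement5Aux.forward hnt hntf h
  · rintro ⟨p, T, R, hp, hcompl, hTbot, hRbot, hpT, hRtf, hRsi, hRnd⟩
    exact Statement5Aux.backward hp hcompl hTbot hRbot hpT hRtf hRsi hRnd
end

section
/- Let G be a non-reduced abelian group (i.e., G contains a non-zero divisible subgroup). Then G is an ISI-group if and only if G is the internal direct sum D ⊕ R of a non-zero torsion-free divisible subgroup D and a torsion-free si-simple subgroup R. -/
/-- A additive monoid is torsion-free if no non-zero element has finite additive order
(the definition `AddMonoid.IsTorsionFree` of the older Mathlib, since removed). -/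
def AddMonoid.IsTorsionFree (G : Type*) [AddMonoid G] : Prop :=
  ∀ g : G, g ≠ 0 → ¬IsOfFinAddOrder g

section Aux

variable {G : Type*} [AddCommGroup G]

lemma IsDivisibleGroup.zsmul {A : Type*} [AddCommGroup A] (h : IsDivisibleGroup A)
    (n : ℤ) (hn : n ≠ 0) (a : A) : ∃ y, n • y = a := by
  obtain ⟨y, hy⟩ := h n.natAbs (Int.natAbs_pos.2 hn) a
  rcases Int.natAbs_eq n with h1 | h1
  · exact ⟨y, by rw [h1, natCast_zsmul, hy]⟩
  · exact ⟨-y, by rw [h1, neg_zsmul, zsmul_neg, neg_neg, natCast_zsmul, hy]⟩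

noncomputable def IsDivisibleGroup.divisibleBy {A : Type*} [AddCommGroup A]
    (h : IsDivisibleGroup A) : DivisibleBy A ℤ where
  div a n := if hn : n = 0 then 0 else Classical.choose (h.zsmul n hn a)
  div_zero a := dif_pos rfl
  div_cancel {n} a hn := by
    have := Classical.choose_spec (h.zsmul n hn a)
    simp only [dif_neg hn]
    exact this

/-- Extension property of divisible groups (injectivity). -/
lemma IsDivisibleGroup.extension {A B D : Type*} [AddCommGroup A] [AddCommGroup B]
    [AddCommGroup D] (hD : IsDivisibleGroup D) (f : A →+ B) (hf : Function.Injective f)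
    (g : A →+ D) : ∃ F : B →+ D, ∀ a, F (f a) = g a := by
  have : DivisibleBy D ℤ := hD.divisibleBy
  obtain ⟨F, hF⟩ := (Module.Baer.of_divisible D).extension_property_addMonoidHom f hf g
  exact ⟨F, fun a => DFunLike.congr_fun hF a⟩

lemma IsDivisibleGroup.of_equiv {A B : Type*} [AddCommGroup A] [AddCommGroup B]
    (e : A ≃+ B) (h : IsDivisibleGroup A) : IsDivisibleGroup B := by
  intro n hn x
  obtain ⟨y, hy⟩ := h n hn (e.symm x)
  exact ⟨e y, by rw [← map_nsmul, hy, e.apply_symm_apply]⟩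

lemma IsDivisibleGroup.range {A : Type*} [AddCommGroup A] (hA : IsDivisibleGroup A)
    (f : A →+ G) : IsDivisibleGroup f.range := by
  intro n hn x
  obtain ⟨a, ha⟩ := x.2
  obtain ⟨b, hb⟩ := hA n hn a
  refine ⟨⟨f b, ⟨b, rfl⟩⟩, Subtype.ext ?_⟩
  show n • f b = (x : G)
  rw [← map_nsmul, hb, ha]

/-- The divisible part of `G`: the join of all divisible subgroups. -/
def dPart (G : Type*) [AddCommGroup G] : AddSubgroup G :=
  ⨆ H : {H : AddSubgroup G // IsDivisibleGroup H}, (H : AddSubgroup G)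

lemma le_dPart {H : AddSubgroup G} (h : IsDivisibleGroup H) : H ≤ dPart G :=
  le_iSup (fun H : {H : AddSubgroup G // IsDivisibleGroup H} => (H : AddSubgroup G)) ⟨H, h⟩

lemma dPart_mem_div : ∀ x ∈ dPart G, ∀ n : ℕ, 0 < n → ∃ y ∈ dPart G, n • y = x := by
  intro x hx n hn
  refine AddSubgroup.iSup_induction (C := fun x => ∃ y ∈ dPart G, n • y = x) _ hx
    (fun i x hxH => ?_) ⟨0, zero_mem _, smul_zero n⟩ ?_
  · obtain ⟨y, hy⟩ := i.2 n hn ⟨x, hxH⟩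
    exact ⟨y, le_dPart i.2 y.2, congrArg Subtype.val hy⟩
  · rintro a b ⟨ya, hya, ha⟩ ⟨yb, hyb, hb⟩
    exact ⟨ya + yb, add_mem hya hyb, by rw [smul_add, ha, hb]⟩

lemma dPart_div : IsDivisibleGroup (dPart G) := by
  intro n hn x
  obtain ⟨y, hy, h⟩ := dPart_mem_div _ x.2 n hn
  exact ⟨⟨y, hy⟩, Subtype.ext h⟩

lemma dPart_si : IsStronglyInvariant (dPart G) := by
  intro ψ s
  exact le_dPart (dPart_div.range ψ) ⟨s, rfl⟩

lemma exists_proj {D R : AddSubgroup G} (h : IsCompl D R) :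
    ∃ π : G →+ G, (∀ x, π x ∈ R) ∧ (∀ x, x - π x ∈ D) ∧ (∀ x ∈ R, π x = x) ∧
      (∀ x ∈ D, π x = 0) := by
  have h' : IsCompl (AddSubgroup.toIntSubmodule R) (AddSubgroup.toIntSubmodule D) :=
    (AddSubgroup.toIntSubmodule (M := G)).isCompl h.symm
  set p := Submodule.linearProjOfIsCompl _ _ h' with hp
  refine ⟨((AddSubgroup.toIntSubmodule R).subtype.comp p).toAddMonoidHom, fun x => ?_, fun x => ?_,
    fun x hx => ?_, fun x hx => ?_⟩
  · exact (p x).2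
  · have h0 : p ((x : G) - (p x : G)) = 0 := by
      have h1 : p ((p x : G)) = p x := Submodule.linearProjOfIsCompl_apply_left h' (p x)
      rw [map_sub, h1, sub_self]
    exact (Submodule.linearProjOfIsCompl_apply_eq_zero_iff h').1 h0
  · exact congrArg Subtype.val (Submodule.linearProjOfIsCompl_apply_left h' ⟨x, hx⟩)
  · have h0 : p x = 0 := Submodule.linearProjOfIsCompl_apply_right' h' hx
    show ((p x : _) : G) = 0
    rw [h0]; rfl

lemma torsionFree_subgroup (htf : AddMonoid.IsTorsionFree G) (H : AddSubgroup G) :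
    AddMonoid.IsTorsionFree H := by
  intro g hg hfin
  exact htf (g : G) (fun h0 => hg (Subtype.ext h0)) (H.subtype.isOfFinAddOrder hfin)

lemma nsmul_ne_zero_of_tf (htf : ∀ (g : G), g ≠ 0 → ¬ IsOfFinAddOrder g) {x : G} (hx : x ≠ 0)
    {n : ℕ} (hn : 0 < n) : n • x ≠ 0 := by
  intro h
  exact htf x hx (isOfFinAddOrder_iff_nsmul_eq_zero.2 ⟨n, hn, h⟩)

lemma zsmul_injective_of_tf (htf : ∀ (g : G), g ≠ 0 → ¬ IsOfFinAddOrder g) {x : G} (hx : x ≠ 0) :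
    Function.Injective (fun k : ℤ => k • x) := by
  intro k k' hkk
  by_contra hne
  have h1 : (k - k') • x = 0 := by
    simp only at hkk
    simp [sub_zsmul, hkk]
  have h2 : (k - k').natAbs • x = 0 := by
    rcases Int.natAbs_eq (k - k') with h | h
    · rw [h] at h1; rwa [natCast_zsmul] at h1
    · rw [h, neg_zsmul, neg_eq_zero] at h1; rwa [natCast_zsmul] at h1
  exact nsmul_ne_zero_of_tf htf hx (Int.natAbs_pos.2 (sub_ne_zero.2 fun hc => hne (by rw [hc]))) h2

lemma exists_prime_order {x : G} (hx : x ≠ 0) (hfin : IsOfFinAddOrder x) :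
    ∃ (p : ℕ) (y : G), p.Prime ∧ y ≠ 0 ∧ p • y = 0 ∧ y ∈ AddSubgroup.zmultiples x := by
  set m := addOrderOf x with hm
  have hm1 : m ≠ 1 := fun h => hx (AddMonoid.addOrderOf_eq_one_iff.1 h)
  have hm0 : 0 < m := hfin.addOrderOf_pos
  set p := m.minFac with hpdef
  have hp : p.Prime := Nat.minFac_prime hm1
  have hpm : p ∣ m := Nat.minFac_dvd m
  refine ⟨p, (m / p) • x, hp, ?_, ?_,
    AddSubgroup.mem_zmultiples_iff.2 ⟨((m / p : ℕ) : ℤ), by rw [natCast_zsmul]⟩⟩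
  · intro h0
    have hdvd : m ∣ m / p := addOrderOf_dvd_of_nsmul_eq_zero h0
    have hlt : m / p < m := Nat.div_lt_self hm0 hp.one_lt
    have hpos : 0 < m / p := Nat.div_pos (Nat.le_of_dvd hm0 hpm) hp.pos
    exact absurd (Nat.le_of_dvd hpos hdvd) (not_le.2 hlt)
  · rw [smul_smul, Nat.mul_div_cancel' hpm, hm, addOrderOf_nsmul_eq_zero]

end Aux

/-- A non-reduced abelian group `G` is an ISI-group iff `G = D ⊕ R` with `D ≠ 0`
torsion-free divisible and `R` torsion-free si-simple. -/
theorem statement6 {G : Type*} [AddCommGroup G]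
    (hnr : ∃ D : AddSubgroup G, D ≠ ⊥ ∧ IsDivisibleGroup D) :
    IsISI G ↔ ∃ D R : AddSubgroup G, IsCompl D R ∧ D ≠ ⊥ ∧ IsDivisibleGroup D ∧
      AddMonoid.IsTorsionFree D ∧ AddMonoid.IsTorsionFree R ∧ SiSimple R := by
  constructor
  · rintro ⟨hnt, hiso⟩
    classical
    have hDdiv : IsDivisibleGroup (dPart G) := dPart_div
    have hDne : dPart G ≠ ⊥ := by
      obtain ⟨D₀, hD0ne, hD0div⟩ := hnr
      intro hbot
      exact hD0ne (le_bot_iff.1 (hbot ▸ le_dPart hD0div))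
    have hker_si : ∀ n : ℕ, IsStronglyInvariant ((nsmulHom (G := G) n)).ker := by
      intro n ψ s
      have hs : n • (s : G) = 0 := s.2
      have h0 : n • s = (0 : ((nsmulHom (G := G) n)).ker) := Subtype.ext (by simpa using hs)
      show ψ s ∈ _
      rw [AddMonoidHom.mem_ker]
      show n • ψ s = 0
      rw [← map_nsmul, h0, map_zero]
    have hDtf' : ∀ x ∈ dPart G, x ≠ 0 → ¬ IsOfFinAddOrder x := by
      intro x hxD hx hfin
      obtain ⟨p, y, hp, hy0, hpy, hymem⟩ := exists_prime_order hx hfin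
      have hyD : y ∈ dPart G := (AddSubgroup.zmultiples_le.2 hxD) hymem
      obtain ⟨z, hzD, hzy⟩ := dPart_mem_div y hyD p hp.pos
      obtain ⟨w, hwD, hwz⟩ := dPart_mem_div z hzD (p * p) (Nat.mul_pos hp.pos hp.pos)
      set K1 := (nsmulHom (G := G) p).ker with hK1
      set K2 := (nsmulHom (G := G) (p * p)).ker with hK2
      have hmemK1 : ∀ a : G, a ∈ K1 ↔ p • a = 0 := fun a => Iff.rfl
      have hmemK2 : ∀ a : G, a ∈ K2 ↔ (p * p) • a = 0 := fun a => Iff.rfl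
      have hK12 : K1 ≤ K2 := by
        intro a ha
        rw [hmemK2, mul_smul, (hmemK1 a).1 ha, smul_zero]
      have hyK1 : y ∈ K1 := (hmemK1 y).2 hpy
      have hzK2 : z ∈ K2 := (hmemK2 z).2 (by rw [mul_smul, hzy, hpy])
      have hK1bot : K1 ≠ ⊥ := fun h => hy0 ((AddSubgroup.eq_bot_iff_forall _).1 h y hyK1)
      have hK2bot : K2 ≠ ⊥ := fun h => hy0 ((AddSubgroup.eq_bot_iff_forall _).1 h y (hK12 hyK1))
      have hK2top : K2 ≠ ⊤ := by
        intro htop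
        have hw2 : (p * p) • w = 0 := (hmemK2 w).1 (htop ▸ AddSubgroup.mem_top w)
        have hz0 : z = 0 := by rw [← hwz, hw2]
        exact hy0 (by rw [← hzy, hz0, smul_zero])
      have hK1top : K1 ≠ ⊤ := fun h => hK2top (top_unique (by rw [← h]; exact hK12))
      obtain ⟨e⟩ := hiso K1 K2 (hker_si p) (hker_si (p * p)) hK1bot hK1top hK2bot hK2top
      set a := e.symm ⟨z, hzK2⟩ with ha
      have hpa : p • a = 0 := Subtype.ext (by simpa using (hmemK1 _).1 a.2)
      have he0 : e (p • a) = 0 := by rw [hpa, map_zero]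
      rw [map_nsmul, ha, e.apply_symm_apply] at he0
      have hz0 : p • z = 0 := by simpa using congrArg Subtype.val he0
      exact hy0 (by rw [← hzy, hz0])
    have hGtf : AddMonoid.IsTorsionFree G := by
      intro x hx hfin
      obtain ⟨p, y, hp, hy0, hpy, _⟩ := exists_prime_order hx hfin
      set K1 := (nsmulHom (G := G) p).ker with hK1
      have hmemK1 : ∀ a : G, a ∈ K1 ↔ p • a = 0 := fun a => Iff.rfl
      have hyK1 : y ∈ K1 := (hmemK1 y).2 hpy
      have hyfin : IsOfFinAddOrder y := isOfFinAddOrder_iff_nsmul_eq_zero.2 ⟨p, hp.pos, hpy⟩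
      have hDtop : dPart G ≠ ⊤ := fun h => hDtf' y (h ▸ AddSubgroup.mem_top y) hy0 hyfin
      obtain ⟨d₀, hd₀D, hd₀0⟩ : ∃ d ∈ dPart G, d ≠ 0 := by
        by_contra hcon
        push_neg at hcon
        exact hDne ((AddSubgroup.eq_bot_iff_forall _).2 hcon)
      have hK1bot : K1 ≠ ⊥ := fun h => hy0 ((AddSubgroup.eq_bot_iff_forall _).1 h y hyK1)
      have hK1top : K1 ≠ ⊤ := by
        intro h
        have hpd : p • d₀ = 0 := (hmemK1 d₀).1 (h ▸ AddSubgroup.mem_top d₀)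
        exact hDtf' d₀ hd₀D hd₀0 (isOfFinAddOrder_iff_nsmul_eq_zero.2 ⟨p, hp.pos, hpd⟩)
      obtain ⟨e⟩ := hiso (dPart G) K1 dPart_si (hker_si p) hDne hDtop hK1bot hK1top
      have h1 : p • e ⟨d₀, hd₀D⟩ = 0 := Subtype.ext (by simpa using (hmemK1 _).1 (e ⟨d₀, hd₀D⟩).2)
      rw [← map_nsmul] at h1
      have h2 : p • (⟨d₀, hd₀D⟩ : dPart G) = 0 := e.injective (by rw [h1, map_zero])
      have h3 : p • d₀ = 0 := by simpa using congrArg Subtype.val h2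
      exact hDtf' d₀ hd₀D hd₀0 (isOfFinAddOrder_iff_nsmul_eq_zero.2 ⟨p, hp.pos, h3⟩)
    obtain ⟨F, hF⟩ := hDdiv.extension (dPart G).subtype Subtype.val_injective
      (AddMonoidHom.id (dPart G))
    set R := F.ker with hRdef
    have hFcoe : ∀ x : G, F ((F x : G)) = F x := fun x => hF (F x)
    have hcompl : IsCompl (dPart G) R := by
      constructor
      · rw [disjoint_iff]
        apply (AddSubgroup.eq_bot_iff_forall _).2
        rintro x ⟨hxD, hxR⟩
        have h1 : F x = ⟨x, hxD⟩ := hF ⟨x, hxD⟩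
        have h2 : F x = 0 := hxR
        rw [h1] at h2
        simpa using congrArg Subtype.val h2
      · rw [codisjoint_iff, eq_top_iff]
        intro x _
        refine AddSubgroup.mem_sup.2 ⟨(F x : G), (F x).2, x - (F x : G), ?_, by abel⟩
        show F (x - (F x : G)) = 0
        rw [map_sub, hFcoe, sub_self]
    refine ⟨dPart G, R, hcompl, hDne, hDdiv, torsionFree_subgroup hGtf _,
      torsionFree_subgroup hGtf _, ?_⟩
    intro S hSsi
    by_contra hScon
    push_neg at hScon
    obtain ⟨hSbot, hStop⟩ := hScon
    set S' := S.map R.subtype with hS'def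
    have hS'R : S' ≤ R := by
      intro x hx
      obtain ⟨σ, hσ, rfl⟩ := AddSubgroup.mem_map.1 hx
      exact σ.2
    obtain ⟨π, hπR, hπD, hπid, hπ0⟩ := exists_proj hcompl
    set Hs := dPart G ⊔ S' with hHsdef
    have hDHs : dPart G ≤ Hs := le_sup_left
    have hS'Hs : S' ≤ Hs := le_sup_right
    have hHssi : IsStronglyInvariant Hs := by
      intro ψ t
      have claim1 : ∀ (dd : G) (hdd : dd ∈ dPart G), (ψ ⟨dd, hDHs hdd⟩ : G) ∈ dPart G := by
        intro dd hdd
        exact le_dPart (dPart_div.range (ψ.comp (AddSubgroup.inclusion hDHs))) ⟨⟨dd, hdd⟩, rfl⟩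
      have claim2 : ∀ (ss : G) (hss : ss ∈ S'), (ψ ⟨ss, hS'Hs hss⟩ : G) ∈ Hs := by
        intro ss hss
        obtain ⟨σ, hσS, hσeq⟩ := AddSubgroup.mem_map.1 hss
        have hmem : ∀ τ : S, ((τ : R) : G) ∈ Hs :=
          fun τ => hS'Hs (AddSubgroup.mem_map.2 ⟨(τ : R), τ.2, rfl⟩)
        set ι₂ : S →+ Hs := AddMonoidHom.mk' (fun τ => ⟨((τ : R) : G), hmem τ⟩)
          (fun τ₁ τ₂ => Subtype.ext (by simp)) with hι₂
        set χ : S →+ R := AddMonoidHom.mk' (fun τ => ⟨π (ψ (ι₂ τ)), hπR _⟩)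
          (fun τ₁ τ₂ => Subtype.ext (by simp)) with hχ
        have hχτ := hSsi χ ⟨σ, hσS⟩
        have hι₂σ : ι₂ ⟨σ, hσS⟩ = ⟨ss, hS'Hs hss⟩ := Subtype.ext hσeq
        have hπmem : π (ψ ⟨ss, hS'Hs hss⟩) ∈ S' := by
          refine AddSubgroup.mem_map.2 ⟨χ ⟨σ, hσS⟩, hχτ, ?_⟩
          show π (ψ (ι₂ ⟨σ, hσS⟩)) = _
          rw [hι₂σ]
        have hdecomp : (ψ ⟨ss, hS'Hs hss⟩ : G) =
            ((ψ ⟨ss, hS'Hs hss⟩ : G) - π (ψ ⟨ss, hS'Hs hss⟩)) + π (ψ ⟨ss, hS'Hs hss⟩) := by abel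
        rw [hdecomp]
        exact add_mem (hDHs (hπD _)) (hS'Hs hπmem)
      obtain ⟨d, hd, s, hs, hds⟩ := AddSubgroup.mem_sup.1 t.2
      have ht : t = ⟨d, hDHs hd⟩ + ⟨s, hS'Hs hs⟩ := Subtype.ext (by simpa using hds.symm)
      rw [ht, map_add]
      exact add_mem (hDHs (claim1 d hd)) (claim2 s hs)
    obtain ⟨τ₀, hτ₀S, hτ₀0⟩ : ∃ τ : R, τ ∈ S ∧ τ ≠ 0 := by
      by_contra hcon
      push_neg at hcon
      exact hSbot ((AddSubgroup.eq_bot_iff_forall _).2 hcon)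
    have hs₀S' : ((τ₀ : G)) ∈ S' := AddSubgroup.mem_map.2 ⟨τ₀, hτ₀S, rfl⟩
    have hs₀R : ((τ₀ : G)) ∈ R := τ₀.2
    have hs₀0 : ((τ₀ : G)) ≠ 0 := fun h => hτ₀0 (Subtype.ext h)
    have hdisj : ∀ x, x ∈ dPart G → x ∈ R → x = 0 :=
      fun x h1 h2 => (AddSubgroup.disjoint_def.1 hcompl.1) h1 h2
    have hDtop : dPart G ≠ ⊤ := fun h => hs₀0 (hdisj _ (h ▸ AddSubgroup.mem_top _) hs₀R)
    have hHsbot : Hs ≠ ⊥ :=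
      fun h => hs₀0 ((AddSubgroup.eq_bot_iff_forall _).1 h _ (hS'Hs hs₀S'))
    have hHstop : Hs ≠ ⊤ := by
      intro h
      obtain ⟨ρ, hρ⟩ : ∃ ρ : R, ρ ∉ S := by
        by_contra hcon
        push_neg at hcon
        exact hStop ((AddSubgroup.eq_top_iff' S).2 hcon)
      have hρHs : (ρ : G) ∈ Hs := h ▸ AddSubgroup.mem_top _
      obtain ⟨d, hd, s, hs, hds⟩ := AddSubgroup.mem_sup.1 hρHs
      have hdR : d ∈ R := by
        have hdeq : d = (ρ : G) - s := by rw [← hds]; abel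
        rw [hdeq]
        exact sub_mem ρ.2 (hS'R hs)
      have hd0 : d = 0 := hdisj d hd hdR
      rw [hd0, zero_add] at hds
      obtain ⟨σ, hσS, hσeq⟩ := AddSubgroup.mem_map.1 hs
      have hσρ : σ = ρ := Subtype.ext (by rw [← hds]; exact hσeq)
      exact hρ (hσρ ▸ hσS)
    obtain ⟨e⟩ := hiso (dPart G) Hs dPart_si hHssi hDne hDtop hHsbot hHstop
    have hHsdiv : IsDivisibleGroup Hs := hDdiv.of_equiv e
    have hS'div : IsDivisibleGroup S' := by
      intro n hn x
      obtain ⟨y, hy⟩ := hHsdiv n hn ⟨(x : G), hS'Hs x.2⟩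
      obtain ⟨d, hd, s, hs, hds⟩ := AddSubgroup.mem_sup.1 y.2
      have h1 : n • d + n • s = (x : G) := by
        have h2 := congrArg Subtype.val hy
        rw [← smul_add, hds]
        simpa using h2
      have hndR : n • d ∈ R := by
        have hh : n • d = (x : G) - n • s := by rw [← h1]; abel
        rw [hh]
        exact sub_mem (hS'R x.2) (nsmul_mem (hS'R hs) n)
      have hnd0 : n • d = 0 := hdisj _ (nsmul_mem hd n) hndR
      have hd0 : d = 0 := by
        by_contra hdne
        exact (nsmul_ne_zero_of_tf hGtf hdne hn) hnd0
      rw [hd0, smul_zero, zero_add] at h1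
      exact ⟨⟨s, hs⟩, Subtype.ext (by simpa using h1)⟩
    exact hs₀0 (hdisj _ (le_dPart hS'div hs₀S') hs₀R)
  · rintro ⟨D, R, hc, hDne, hDdiv, hDtf, hRtf, hRsi⟩
    obtain ⟨d₁, hd₁D, hd₁0⟩ : ∃ d ∈ D, d ≠ 0 := by
      by_contra hcon
      push_neg at hcon
      exact hDne ((AddSubgroup.eq_bot_iff_forall _).2 hcon)
    have hnt : Nontrivial G := ⟨d₁, 0, hd₁0⟩
    have hdisj : ∀ x, x ∈ D → x ∈ R → x = 0 :=
      fun x h1 h2 => (AddSubgroup.disjoint_def.1 hc.1) h1 h2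
    have hGtf : ∀ (g : G), g ≠ 0 → ¬ IsOfFinAddOrder g := by
      intro g hg hfin
      obtain ⟨n, hn, hng⟩ := isOfFinAddOrder_iff_nsmul_eq_zero.1 hfin
      have hgtop : g ∈ D ⊔ R := by rw [codisjoint_iff.1 hc.2]; exact AddSubgroup.mem_top g
      obtain ⟨d, hd, r, hr, hdr⟩ := AddSubgroup.mem_sup.1 hgtop
      have h1 : n • d + n • r = 0 := by rw [← smul_add, hdr, hng]
      have hndR : n • d ∈ R := by
        have hh : n • d = -(n • r) := eq_neg_of_add_eq_zero_left h1
        rw [hh]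
        exact neg_mem (nsmul_mem hr n)
      have hnd0 : n • d = 0 := hdisj _ (nsmul_mem hd n) hndR
      have hnr0 : n • r = 0 := by rwa [hnd0, zero_add] at h1
      have hd0 : d = 0 := by
        by_contra hne
        exact hDtf ⟨d, hd⟩ (fun hh => hne (congrArg Subtype.val hh))
          (isOfFinAddOrder_iff_nsmul_eq_zero.2 ⟨n, hn, Subtype.ext (by simpa using hnd0)⟩)
      have hr0 : r = 0 := by
        by_contra hne
        exact hRtf ⟨r, hr⟩ (fun hh => hne (congrArg Subtype.val hh))
          (isOfFinAddOrder_iff_nsmul_eq_zero.2 ⟨n, hn, Subtype.ext (by simpa using hnr0)⟩)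
      exact hg (by rw [← hdr, hd0, hr0, add_zero])
    obtain ⟨π, hπR, hπD, hπid, hπ0⟩ := exists_proj hc
    have key : ∀ H : AddSubgroup G, IsStronglyInvariant H → H ≠ ⊥ → H ≠ ⊤ → H = D := by
      intro H hHsi hHbot hHtop
      obtain ⟨h₀, hh₀H, hh₀0⟩ : ∃ h ∈ H, h ≠ 0 := by
        by_contra hcon
        push_neg at hcon
        exact hHbot ((AddSubgroup.eq_bot_iff_forall _).2 hcon)
      have hDH : D ≤ H := by
        intro dd hdd
        obtain ⟨F, hFp⟩ := hDdiv.extension (zmultiplesHom G h₀)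
          (zsmul_injective_of_tf hGtf hh₀0) (zmultiplesHom D ⟨dd, hdd⟩)
        have hsi := hHsi ((D.subtype.comp F).comp H.subtype) ⟨h₀, hh₀H⟩
        have hF1 : F h₀ = ⟨dd, hdd⟩ := by simpa using hFp 1
        have hFH : ((F h₀ : D) : G) ∈ H := hsi
        rw [hF1] at hFH
        exact hFH
      have hπH : ∀ h ∈ H, π h ∈ H := by
        intro h hh
        have h1 : π h = h - (h - π h) := by abel
        rw [h1]
        exact sub_mem hh (hDH (hπD h))
      set S : AddSubgroup R := H.comap R.subtype with hSdef
      have hmemS : ∀ τ : R, τ ∈ S ↔ (τ : G) ∈ H := fun τ => Iff.rfl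
      have hSsi : IsStronglyInvariant S := by
        intro χ τ
        set τmap : H →+ S := AddMonoidHom.mk'
          (fun h => ⟨⟨π (h : G), hπR _⟩, (hmemS _).2 (hπH _ h.2)⟩)
          (fun a b => Subtype.ext (Subtype.ext (by simp))) with hτmap
        set Φ : H →+ G := R.subtype.comp (χ.comp τmap) with hΦ
        have hel : ((τ : R) : G) ∈ H := (hmemS _).1 τ.2
        have h3 := hHsi Φ ⟨((τ : R) : G), hel⟩
        have hτm : τmap ⟨((τ : R) : G), hel⟩ = τ :=
          Subtype.ext (Subtype.ext (hπid _ (τ : R).2))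
        have h4 : ((χ (τmap ⟨((τ : R) : G), hel⟩) : R) : G) ∈ H := h3
        rw [hτm] at h4
        exact (hmemS _).2 h4
      rcases hRsi S hSsi with hSb | hSt
      · apply le_antisymm _ hDH
        intro h hh
        have h1 : (⟨π h, hπR h⟩ : R) ∈ S := (hmemS _).2 (hπH h hh)
        rw [hSb] at h1
        have h2 : π h = 0 := by simpa using congrArg Subtype.val (AddSubgroup.mem_bot.1 h1)
        have h3 : h = h - π h := by rw [h2, sub_zero]
        rw [h3]
        exact hπD h
      · exfalso
        apply hHtop
        rw [eq_top_iff]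
        intro x _
        have h1 : (⟨π x, hπR x⟩ : R) ∈ S := by rw [hSt]; exact AddSubgroup.mem_top _
        have h2 : π x ∈ H := (hmemS _).1 h1
        have h3 : x = (x - π x) + π x := by abel
        rw [h3]
        exact add_mem (hDH (hπD x)) h2
    refine ⟨hnt, fun H F hH hF hHb hHt hFb hFt => ⟨?_⟩⟩
    exact AddEquiv.addSubgroupCongr ((key H hH hHb hHt).trans (key F hF hFb hFt).symm)
end

section
/- Let G be a torsion-free ISI-group and let H be a strongly invariant subgroup of G with {0} ≠ H ⊊ G. Then there is at most one prime p such that H fails to be p-pure in G; that is, H is q-pure in G for every prime q with at most one exception. Moreover, if H is not p-pure in G for some prime p, then pG is properly contained in H. -/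
/-- A non-trivial proper strongly invariant subgroup `H` of a torsion-free ISI-group is
`q`-pure for all primes `q` with at most one exception `p`; moreover if `H` is not `p`-pure
then `pG ⊊ H`. -/
theorem statement7 {G : Type*} [AddCommGroup G] (htf : ∀ g : G, g ≠ 0 → ¬IsOfFinAddOrder g)
    (hisi : IsISI G) (H : AddSubgroup G) (hsi : IsStronglyInvariant H)
    (hne : H ≠ ⊥) (hpr : H ≠ ⊤) :
    (∀ p q : ℕ, p.Prime → q.Prime → ¬ IsNPure p H → ¬ IsNPure q H → p = q) ∧
    (∀ p : ℕ, p.Prime → ¬ IsNPure p H → (nsmulHom (G := G) p).range < H) := by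
  classical
  have hinj : ∀ p : ℕ, 0 < p → Function.Injective (fun x : G => p • x) := by
    intro p hp x y hxy
    by_contra hne'
    have hz : p • (x - y) = 0 := by
      have hxy' : p • x = p • y := hxy
      rw [smul_sub, hxy', sub_self]
    exact htf (x - y) (sub_ne_zero.mpr hne')
      (isOfFinAddOrder_iff_nsmul_eq_zero.mpr ⟨p, hp, hz⟩)
  have key : ∀ p : ℕ, p.Prime → ¬ IsNPure p H → (nsmulHom (G := G) p).range < H := by
    intro p hp hnp
    set A : AddSubgroup G := H.comap (nsmulHom p) with hA
    have hHA : H ≤ A := by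
      intro x hx
      show p • x ∈ H
      exact AddSubgroup.nsmul_mem H hx p
    -- there is g ∈ A \ H
    obtain ⟨g, hgA, hgH⟩ : ∃ g, g ∈ A ∧ g ∉ H := by
      by_contra hc
      push_neg at hc
      apply hnp
      apply le_antisymm
      · rintro x hx
        rw [AddSubgroup.mem_inf] at hx
        obtain ⟨hxH, y, hy⟩ := hx
        have hyA : y ∈ A := by
          show p • y ∈ H
          have : nsmulHom (G := G) p y = p • y := rfl
          rw [← this, hy]; exact hxH
        exact ⟨y, hc y hyA, hy⟩
      · rintro x ⟨y, hyH, rfl⟩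
        rw [AddSubgroup.mem_inf]
        exact ⟨AddSubgroup.nsmul_mem H hyH p, y, rfl⟩
    -- A is strongly invariant
    have hAsi : IsStronglyInvariant A := by
      intro ψ a
      show p • (ψ a : G) ∈ H
      have hpa : p • (a : G) ∈ H := a.2
      have h1 := hsi (ψ.comp (AddSubgroup.inclusion hHA)) ⟨p • (a : G), hpa⟩
      have h2 : (AddSubgroup.inclusion hHA) ⟨p • (a : G), hpa⟩ = p • a := by
        apply Subtype.ext; rfl
      rw [AddMonoidHom.comp_apply, h2, map_nsmul] at h1
      exact h1
    have hAbot : A ≠ ⊥ := by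
      intro hb
      exact hne (le_bot_iff.mp (hb ▸ hHA))
    -- A = ⊤
    have hAtop : A = ⊤ := by
      by_contra hAt
      obtain ⟨f⟩ := hisi.2 A H hAsi hsi hAbot hAt hne hpr
      have h1 := hsi (A.subtype.comp f.symm.toAddMonoidHom) (f ⟨g, hgA⟩)
      simp only [AddMonoidHom.comp_apply, AddEquiv.toAddMonoidHom_eq_coe,
        AddMonoidHom.coe_coe, AddEquiv.symm_apply_apply, AddSubgroup.coe_subtype] at h1
      exact hgH h1
    have hle : (nsmulHom (G := G) p).range ≤ H := by
      rintro x ⟨y, rfl⟩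
      have : y ∈ A := hAtop ▸ AddSubgroup.mem_top y
      exact this
    refine lt_of_le_of_ne hle ?_
    intro heq
    -- if pG = H, divide-by-p contradicts strong invariance
    have hmem : ∀ h : H, ∃ x : G, p • x = (h : G) := by
      intro h
      have : (h : G) ∈ (nsmulHom (G := G) p).range := heq ▸ h.2
      obtain ⟨x, hx⟩ := this
      exact ⟨x, hx⟩
    let d : H → G := fun h => (hmem h).choose
    have hd : ∀ h : H, p • d h = (h : G) := fun h => (hmem h).choose_spec
    have hadd : ∀ a b : H, d (a + b) = d a + d b := by
      intro a b
      apply hinj p hp.pos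
      show p • d (a + b) = p • (d a + d b)
      rw [hd, smul_add, hd, hd]
      rfl
    have hall : ∀ x : G, x ∈ H := by
      intro x
      have hpx : p • x ∈ H := hle ⟨x, rfl⟩
      have h1 := hsi (AddMonoidHom.mk' d hadd) ⟨p • x, hpx⟩
      have h2 : d ⟨p • x, hpx⟩ = x := by
        apply hinj p hp.pos
        show p • d ⟨p • x, hpx⟩ = p • x
        rw [hd]
      simp only [AddMonoidHom.mk'_apply] at h1
      rwa [h2] at h1
    exact hpr ((AddSubgroup.eq_top_iff' H).mpr hall)
  refine ⟨?_, key⟩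
  intro p q hp hq hnp hnq
  by_contra hpq
  have hcop : Nat.Coprime p q := (Nat.coprime_primes hp hq).mpr hpq
  obtain ⟨a, b, hab⟩ : IsCoprime (p : ℤ) (q : ℤ) := Nat.isCoprime_iff_coprime.mpr hcop
  have hpH := (key p hp hnp).le
  have hqH := (key q hq hnq).le
  apply hpr
  rw [AddSubgroup.eq_top_iff']
  intro x
  have hx : x = a • (p • x) + b • (q • x) := by
    have h1 : (p : ℤ) • x = p • x := natCast_zsmul x p
    have h2 : (q : ℤ) • x = q • x := natCast_zsmul x q
    calc x = (1 : ℤ) • x := (one_smul _ _).symm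
      _ = (a * p + b * q) • x := by rw [hab]
      _ = a • ((p : ℤ) • x) + b • ((q : ℤ) • x) := by rw [add_smul, mul_smul, mul_smul]
      _ = a • (p • x) + b • (q • x) := by rw [h1, h2]
  rw [hx]
  exact AddSubgroup.add_mem H (AddSubgroup.zsmul_mem H (hpH ⟨x, rfl⟩) a)
    (AddSubgroup.zsmul_mem H (hqH ⟨x, rfl⟩) b)
end

section
/- Every non-zero direct summand of an ISI-group is again an ISI-group: if G is an ISI-group and G is the internal direct sum A ⊕ B of subgroups A and B with A ≠ {0}, then A is an ISI-group. -/
section aux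
variable {G : Type*} [AddCommGroup G]

lemma le_homGenSub (S : AddSubgroup G) : S ≤ homGenSub S := by
  intro x hx
  exact le_iSup (fun φ : S →+ G => φ.range) S.subtype ⟨⟨x, hx⟩, rfl⟩

lemma homGenSub_eq_of_si {S : AddSubgroup G} (h : IsStronglyInvariant S) :
    homGenSub S = S :=
  le_antisymm (iSup_le fun φ => by rintro x ⟨s, rfl⟩; exact h φ s) (le_homGenSub S)

lemma homGenSub_si (S : AddSubgroup G) : IsStronglyInvariant (homGenSub S) := by
  suffices h : ∀ (ψ : (⨆ φ : S →+ G, φ.range : AddSubgroup G) →+ G) (x : G)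
      (hx : x ∈ ⨆ φ : S →+ G, φ.range), ψ ⟨x, hx⟩ ∈ ⨆ φ : S →+ G, φ.range by
    rintro ψ ⟨x, hx⟩; exact h ψ x hx
  intro ψ x hx
  refine AddSubgroup.iSup_induction' (fun φ : S →+ G => φ.range)
    (C := fun x hx => ψ ⟨x, hx⟩ ∈ ⨆ φ : S →+ G, φ.range)
    (fun φ x hxm => ?_) (by
      show ψ ⟨0, zero_mem _⟩ ∈ ⨆ φ : S →+ G, φ.range
      rw [show (⟨(0:G), zero_mem _⟩ : (⨆ φ : S →+ G, φ.range : AddSubgroup G)) = 0 from rfl,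
        map_zero]
      exact zero_mem _) (fun x y hx hy cx cy => ?_) hx
  · obtain ⟨s, rfl⟩ := hxm
    have hr : φ.range ≤ ⨆ φ : S →+ G, φ.range := le_iSup (fun φ : S →+ G => φ.range) φ
    set χ : S →+ G := ψ.comp (φ.codRestrict (⨆ φ : S →+ G, φ.range) fun t => hr ⟨t, rfl⟩)
    have heq : ψ ⟨φ s, _⟩ = χ s := rfl
    rw [heq]
    exact le_iSup (fun φ : S →+ G => φ.range) χ ⟨s, rfl⟩
  · show ψ ⟨x + y, add_mem hx hy⟩ ∈ ⨆ φ : S →+ G, φ.range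
    have heq : (⟨x + y, add_mem hx hy⟩ : (⨆ φ : S →+ G, φ.range : AddSubgroup G)) =
      ⟨x, hx⟩ + ⟨y, hy⟩ := rfl
    rw [heq, map_add]
    exact add_mem cx cy

lemma homGenSub_congr {S S' : AddSubgroup G} (e : S ≃+ S') :
    homGenSub S = homGenSub S' := by
  have key : ∀ {S S' : AddSubgroup G}, (S ≃+ S') → homGenSub S ≤ homGenSub S' := by
    intro S S' e
    refine iSup_le fun φ => ?_
    rintro x ⟨s, rfl⟩
    have : φ s = (φ.comp e.symm.toAddMonoidHom) (e s) := by simp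
    rw [this]
    exact le_iSup (fun φ : S' →+ G => φ.range) (φ.comp e.symm.toAddMonoidHom) ⟨e s, rfl⟩
  exact le_antisymm (key e) (key e.symm)

end aux

/-- A non-zero direct summand of an ISI-group is an ISI-group. -/
theorem statement8 {G : Type*} [AddCommGroup G] (hisi : IsISI G)
    (A B : AddSubgroup G) (hcompl : IsCompl A B) (hA : A ≠ ⊥) :
    IsISI A := by
  classical
  -- the projection onto A
  have hc' : IsCompl (AddSubgroup.toIntSubmodule A) (AddSubgroup.toIntSubmodule B) :=
    AddSubgroup.toIntSubmodule.isCompl hcompl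
  let π : G →ₗ[ℤ] (AddSubgroup.toIntSubmodule A) := Submodule.linearProjOfIsCompl _ _ hc'
  let p : G →+ A := AddMonoidHom.mk' (fun x => ⟨(π x : G), (π x).2⟩)
    (fun a b => by ext; simp)
  have hp_left : ∀ x ∈ A, ((p x : A) : G) = x := by
    intro x hx
    have : π x = ⟨x, hx⟩ := Submodule.linearProjOfIsCompl_apply_left hc' ⟨x, hx⟩
    simp only [p, AddMonoidHom.mk'_apply, this]
  -- the trace of an si-subgroup of A intersected with A
  have hinj := A.subtype_injective
  have key : ∀ K : AddSubgroup A, IsStronglyInvariant K →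
      homGenSub (K.map A.subtype) ⊓ A = K.map A.subtype := by
    intro K hK
    apply le_antisymm
    · have claim : ∀ x ∈ homGenSub (K.map A.subtype), p x ∈ K := by
        intro x hx
        refine AddSubgroup.iSup_induction (C := fun x => p x ∈ K)
          (fun φ : (K.map A.subtype) →+ G => φ.range) hx (fun φ x hxm => ?_)
          (by simpa using zero_mem K) (fun x y cx cy => by show p (x + y) ∈ K; rw [map_add]; exact add_mem cx cy)
        obtain ⟨s, rfl⟩ := hxm
        let e := K.equivMapOfInjective A.subtype hinj
        let ρ : K →+ A := p.comp (φ.comp e.toAddMonoidHom)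
        have := hK ρ (e.symm s)
        simpa [ρ, e] using this
      rintro x ⟨hxT, hxA⟩
      exact ⟨p x, claim x hxT, hp_left x hxA⟩
    · exact le_inf (le_homGenSub _) (AddSubgroup.map_subtype_le K)
  have keyT : ∀ K : AddSubgroup A, IsStronglyInvariant K → K ≠ ⊥ → K ≠ ⊤ →
      homGenSub (K.map A.subtype) ≠ ⊥ ∧ homGenSub (K.map A.subtype) ≠ ⊤ := by
    intro K hK hKbot hKtop
    constructor
    · intro h
      apply hKbot
      have : K.map A.subtype ≤ ⊥ := h ▸ le_homGenSub _
      have : K.map A.subtype = ⊥ := le_bot_iff.mp this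
      apply AddSubgroup.map_injective hinj
      simpa using this
    · intro h
      apply hKtop
      have hAle : (A : AddSubgroup G) ≤ K.map A.subtype := by
        rw [← key K hK, h]
        exact le_inf le_top le_rfl
      ext a
      simp only [AddSubgroup.mem_top, iff_true]
      obtain ⟨b, hb, hba⟩ := hAle a.2
      have : b = a := Subtype.ext hba
      exact this ▸ hb
  obtain ⟨hGnt, hiso⟩ := hisi
  refine ⟨(AddSubgroup.nontrivial_iff_ne_bot A).mpr hA, ?_⟩
  intro H F hsiH hsiF hHbot hHtop hFbot hFtop
  obtain ⟨hHb, hHt⟩ := keyT H hsiH hHbot hHtop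
  obtain ⟨hFb, hFt⟩ := keyT F hsiF hFbot hFtop
  obtain ⟨θ⟩ := hiso _ _ (homGenSub_si (H.map A.subtype)) (homGenSub_si (F.map A.subtype))
    hHb hHt hFb hFt
  have hTeq : homGenSub (H.map A.subtype) = homGenSub (F.map A.subtype) := by
    have := homGenSub_congr θ
    rwa [homGenSub_eq_of_si (homGenSub_si _), homGenSub_eq_of_si (homGenSub_si _)] at this
  have : H.map A.subtype = F.map A.subtype := by
    rw [← key H hsiH, ← key F hsiF, hTeq]
  have hHF : H = F := AddSubgroup.map_injective hinj this
  subst hHF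
  exact ⟨AddEquiv.refl _⟩
end

section
/- A non-zero divisible abelian group D is an ISI-group if and only if D is torsion-free. -/
-- torsion kernel is strongly invariant
lemma si_ker {D : Type*} [AddCommGroup D] (n : ℕ) :
    IsStronglyInvariant ((nsmulHom (G := D) n).ker) := by
  intro ψ s
  have hs : n • (s : D) = 0 := s.2
  have : n • (s : ((nsmulHom (G := D) n).ker)) = 0 := by
    ext; simpa using hs
  have : ψ (n • s) = 0 := by rw [this, map_zero]
  rw [map_nsmul] at this
  exact this

/-- A non-zero divisible abelian group is an ISI-group iff it is torsion-free. -/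
theorem statement9 {D : Type*} [AddCommGroup D] [Nontrivial D]
    (hdiv : IsDivisibleGroup D) :
    IsISI D ↔ AddMonoid.IsTorsionFree D := by
  constructor
  · rintro ⟨_, hiso⟩ x hx hfin
    -- produce an element y of prime order p
    set n₀ := addOrderOf x with hn₀
    have hn₀pos : 0 < n₀ := hfin.addOrderOf_pos
    have hn₀ne1 : n₀ ≠ 1 := by
      intro h
      exact hx (by simpa [h] using (AddMonoid.addOrderOf_eq_one_iff.mp h))
    set p := n₀.minFac with hpdef
    have hp : p.Prime := Nat.minFac_prime hn₀ne1
    have hpdvd : p ∣ n₀ := Nat.minFac_dvd n₀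
    set y : D := (n₀ / p) • x with hy
    have hpy : p • y = 0 := by
      rw [hy, smul_smul, Nat.mul_div_cancel' hpdvd, hn₀, addOrderOf_nsmul_eq_zero]
    have hy0 : y ≠ 0 := by
      intro h
      have hdvd : n₀ ∣ n₀ / p := addOrderOf_dvd_of_nsmul_eq_zero (by rw [← hy, h])
      have h1 : 0 < n₀ / p := Nat.div_pos (Nat.le_of_dvd hn₀pos hpdvd) hp.pos
      have h2 : n₀ / p < n₀ := Nat.div_lt_self hn₀pos hp.one_lt
      exact absurd (Nat.le_of_dvd h1 hdvd) (by omega)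
    set H := (nsmulHom (G := D) p).ker with hHdef
    set F := (nsmulHom (G := D) (p * p)).ker with hFdef
    have hyH : y ∈ H := by
      show p • y = 0
      exact hpy
    have hyF : y ∈ F := by
      show (p * p) • y = 0
      rw [mul_smul, hpy, smul_zero]
    have hHb : H ≠ ⊥ := by
      intro h
      rw [h, AddSubgroup.mem_bot] at hyH
      exact hy0 hyH
    have hFb : F ≠ ⊥ := by
      intro h
      rw [h, AddSubgroup.mem_bot] at hyF
      exact hy0 hyF
    have hHt : H ≠ ⊤ := by
      intro h
      obtain ⟨w, hw⟩ := hdiv p hp.pos y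
      have : w ∈ H := h ▸ AddSubgroup.mem_top w
      have : p • w = 0 := this
      exact hy0 (by rw [← hw, this])
    have hFt : F ≠ ⊤ := by
      intro h
      obtain ⟨w, hw⟩ := hdiv (p * p) (Nat.mul_pos hp.pos hp.pos) y
      have : w ∈ F := h ▸ AddSubgroup.mem_top w
      have : (p * p) • w = 0 := this
      exact hy0 (by rw [← hw, this])
    obtain ⟨e⟩ := hiso H F (si_ker p) (si_ker (p * p)) hHb hHt hFb hFt
    -- F contains an element not killed by p, but all of H is killed by p
    obtain ⟨w, hw⟩ := hdiv p hp.pos y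
    have hwF : w ∈ F := by
      show (p * p) • w = 0
      rw [mul_smul, hw, hpy]
    set zF : F := ⟨w, hwF⟩ with hzF
    set u : H := e.symm zF with hu
    have hpu : p • u = 0 := by
      ext
      have : p • (u : D) = 0 := u.2
      simpa using this
    have : p • zF = 0 := by
      have := congrArg e (congrArg (fun t => p • t) (e.symm_apply_apply u).symm)
      calc p • zF = p • e u := by rw [hu, e.apply_symm_apply]
        _ = e (p • u) := by rw [map_nsmul]
        _ = 0 := by rw [hpu, map_zero]
    have : p • w = 0 := congrArg Subtype.val this
    exact hy0 (by rw [← hw, this])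
  · intro htf
    refine ⟨‹_›, fun H F hH hF hHb hHt hFb hFt => ?_⟩
    -- show any nonzero si subgroup is ⊤, contradiction with hHt
    exfalso
    apply hHt
    -- D is injective as ℤ-module
    letI : DivisibleBy D ℤ := {
      div := fun a n => if h : n = 0 then 0 else
        (if 0 ≤ n then (hdiv n.natAbs (Int.natAbs_pos.2 h) a).choose
         else -(hdiv n.natAbs (Int.natAbs_pos.2 h) a).choose)
      div_zero := fun a => by simp
      div_cancel := fun {n} a h => by
        simp only [dif_neg h]
        set c := (hdiv n.natAbs (Int.natAbs_pos.2 h) a).choose with hc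
        have hspec : n.natAbs • c = a := (hdiv n.natAbs (Int.natAbs_pos.2 h) a).choose_spec
        rcases le_or_gt 0 n with hn | hn
        · rw [if_pos hn, ← hspec, ← natCast_zsmul]
          congr 1; omega
        · rw [if_neg (not_le.2 hn), smul_neg, ← neg_zsmul, ← hspec, ← natCast_zsmul]
          congr 1; omega }
    have hinj : Module.Injective ℤ D := (Module.Baer.of_divisible D).injective
    obtain ⟨s, hs0⟩ := AddSubgroup.ne_bot_iff_exists_ne_zero.mp hHb
    rw [AddSubgroup.eq_top_iff']
    intro x
    -- maps ULift ℤ → H and ULift ℤ → D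
    let i : ULift.{_} ℤ →ₗ[ℤ] H :=
      (LinearMap.toSpanSingleton ℤ H s).comp (ULift.moduleEquiv.toLinearMap)
    let g : ULift.{_} ℤ →ₗ[ℤ] D :=
      (LinearMap.toSpanSingleton ℤ D x).comp (ULift.moduleEquiv.toLinearMap)
    have hi : Function.Injective i := by
      intro a b hab
      have h1 : (a.down - b.down) • s = 0 := by
        have : a.down • s = b.down • s := hab
        rw [sub_smul, this, sub_self]
      have h2 : a.down - b.down = 0 := by
        by_contra hne
        have hcs : (a.down - b.down) • (s : D) = 0 := by
          have := congrArg (Subtype.val) h1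
          simpa using this
        have hs0' : (s : D) ≠ 0 := by
          simpa [ZeroMemClass.coe_eq_zero] using hs0
        apply htf (s : D) hs0'
        rcases Int.natAbs_eq (a.down - b.down) with he | he
        · refine isOfFinAddOrder_iff_nsmul_eq_zero.mpr ⟨(a.down - b.down).natAbs, by omega, ?_⟩
          rw [← natCast_zsmul, ← he, hcs]
        · refine isOfFinAddOrder_iff_nsmul_eq_zero.mpr ⟨(a.down - b.down).natAbs, by omega, ?_⟩
          rw [← natCast_zsmul]
          have : ((a.down - b.down).natAbs : ℤ) • (s : D) = -((a.down - b.down) • (s:D)) := by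
            rw [← neg_zsmul]; congr 1; omega
          rw [this, hcs, neg_zero]
      ext; omega
    obtain ⟨h, hcomm⟩ := hinj.out i hi g
    have hx : h (i (ULift.up 1)) = x := by
      rw [hcomm]
      show (1 : ℤ) • x = x
      simp
    have hiup : i (ULift.up 1) = s := by
      show (1 : ℤ) • s = s
      simp
    have := hH h.toAddMonoidHom s
    rw [← hiup, ] at this
    simpa [hx] using this
end

section
/- Let G be a torsion-free abelian group and let H be a strongly invariant subgroup of G. Then the purification H_* = {x ∈ G : nx ∈ H for some positive integer n} is also a strongly invariant subgroup of G. -/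
/-- The purification `H_* = {x ∈ G : nx ∈ H for some positive integer n}` of a subgroup. -/
def purification {G : Type*} [AddCommGroup G] (H : AddSubgroup G) : AddSubgroup G where
  carrier := {x : G | ∃ n : ℕ, 0 < n ∧ n • x ∈ H}
  zero_mem' := ⟨1, Nat.one_pos, by simpa using H.zero_mem⟩
  add_mem' := by
    rintro a b ⟨n, hn, ha⟩ ⟨m, hm, hb⟩
    refine ⟨n * m, Nat.mul_pos hn hm, ?_⟩
    rw [smul_add]
    refine add_mem ?_ ?_
    · rw [mul_comm, mul_smul]; exact AddSubgroup.nsmul_mem H ha m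
    · rw [mul_smul]; exact AddSubgroup.nsmul_mem H hb n
  neg_mem' := by
    rintro a ⟨n, hn, ha⟩
    exact ⟨n, hn, by simpa [smul_neg] using H.neg_mem ha⟩

theorem le_purification {G : Type*} [AddCommGroup G] (H : AddSubgroup G) :
    H ≤ purification H :=
  fun h hh => ⟨1, Nat.one_pos, by simpa using hh⟩

theorem IsStronglyInvariant.map_mem_of_le {G : Type*} [AddCommGroup G] {S K : AddSubgroup G}
    (hS : IsStronglyInvariant S) (hSK : S ≤ K) (ψ : K →+ G) {x : G} (hx : x ∈ S) :
    ψ ⟨x, hSK hx⟩ ∈ S :=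
  hS (ψ.comp (AddSubgroup.inclusion hSK)) ⟨x, hx⟩

theorem statement10_general {G : Type*} [AddCommGroup G]
    (H : AddSubgroup G) (hsi : IsStronglyInvariant H) :
    IsStronglyInvariant (purification H) := by
  rintro ψ ⟨s, n, hn, hns⟩
  refine ⟨n, hn, ?_⟩
  have hψ : ψ ⟨n • s, le_purification H hns⟩ = n • ψ ⟨s, n, hn, hns⟩ := by
    rw [← map_nsmul]; rfl
  exact hψ ▸ hsi.map_mem_of_le (le_purification H) ψ hns

/-- In a torsion-free abelian group, the purification of a strongly invariant subgroup is
strongly invariant. -/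
theorem statement10 {G : Type*} [AddCommGroup G] (htf : AddMonoid.IsTorsionFree G)
    (H : AddSubgroup G) (hsi : IsStronglyInvariant H) :
    IsStronglyInvariant (purification H) :=
  statement10_general H hsi
end

section
/- Every direct summand of a si-simple abelian group is si-simple: if G is si-simple and G is the internal direct sum A ⊕ B of subgroups A and B, then A is si-simple. -/
/-!
Given a strongly invariant subgroup `S` of a retract `A` of `G`, consider the subgroup `T` of `G`
generated by the images of all homomorphisms `S → G`. It is strongly invariant in `G`, so it is
`0` or `G`. Composing with the retraction `G → A` sends `T` into `S`, since `S` is strongly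
invariant in `A`; hence `T = G` forces `S = A`, while `T = 0` forces `S = 0` because `S ↪ G`
has image in `T`.
-/

namespace AddSubgroup

variable {G : Type*} [AddCommGroup G]

theorem isStronglyInvariant_iSup_range (H : Type*) [AddCommGroup H] :
    IsStronglyInvariant (⨆ φ : H →+ G, φ.range) := by
  set T := ⨆ φ : H →+ G, φ.range
  have range_le (φ : H →+ G) : φ.range ≤ T := le_iSup (fun φ : H →+ G => φ.range) φ
  intro ψ ⟨t, ht⟩
  induction ht using iSup_induction' with
  | hp φ x hx =>
    obtain ⟨h, rfl⟩ := hx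
    exact range_le (ψ.comp (φ.codRestrict T fun h => range_le φ ⟨h, rfl⟩)) ⟨h, rfl⟩
  | h1 =>
    change ψ 0 ∈ T
    rw [map_zero]
    exact T.zero_mem
  | hadd x y hx hy ihx ihy =>
    change ψ (⟨x, hx⟩ + ⟨y, hy⟩) ∈ T
    rw [map_add]
    exact T.add_mem ihx ihy

theorem map_iSup_range_le {A : Type*} [AddCommGroup A] {S : AddSubgroup A}
    (hS : IsStronglyInvariant S) (π : G →+ A) :
    (⨆ φ : S →+ G, φ.range).map π ≤ S := by
  rw [map_iSup]
  refine iSup_le fun φ => ?_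
  rintro _ ⟨_, ⟨s, rfl⟩, rfl⟩
  exact hS (π.comp φ) s

end AddSubgroup

theorem SiSimple.of_leftInverse {A G : Type*} [AddCommGroup A] [AddCommGroup G]
    (hG : SiSimple G) (i : A →+ G) (π : G →+ A) (hπi : Function.LeftInverse π i) :
    SiSimple A := by
  intro S hS
  set T := ⨆ φ : S →+ G, φ.range
  have i_mem (s : S) : i s ∈ T :=
    le_iSup (fun φ : S →+ G => φ.range) (i.comp S.subtype) ⟨s, rfl⟩
  rcases hG T (AddSubgroup.isStronglyInvariant_iSup_range S) with hT | hT
  · refine Or.inl (AddSubgroup.eq_bot_iff_forall S |>.2 fun a ha => ?_)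
    have : i a = 0 := by simpa [hT] using i_mem ⟨a, ha⟩
    rw [← hπi a, this, map_zero]
  · refine Or.inr (eq_top_iff.2 fun a _ => ?_)
    have : i a ∈ T := hT ▸ AddSubgroup.mem_top (i a)
    rw [← hπi a]
    exact AddSubgroup.map_iSup_range_le hS π ⟨i a, this, rfl⟩

theorem AddSubgroup.exists_leftInverse_subtype_of_isCompl {G : Type*} [AddCommGroup G]
    {A B : AddSubgroup G} (hAB : IsCompl A B) :
    ∃ π : G →+ A, Function.LeftInverse π A.subtype := by
  have hAB' := AddSubgroup.toIntSubmodule.isCompl_iff.1 hAB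
  exact ⟨(Submodule.projectionOnto _ _ hAB').toAddMonoidHom,
    Submodule.projectionOnto_apply_left hAB'⟩

/-- A direct summand of a si-simple abelian group is si-simple. -/
theorem statement11 {G : Type*} [AddCommGroup G] (hsimple : SiSimple G)
    (A B : AddSubgroup G) (hcompl : IsCompl A B) :
    SiSimple A := by
  obtain ⟨π, hπ⟩ := AddSubgroup.exists_leftInverse_subtype_of_isCompl hcompl
  exact hsimple.of_leftInverse A.subtype π hπ
end

section
/- Every direct summand of an s-irreducible torsion-free abelian group is s-irreducible: if G is a torsion-free s-irreducible group and G is the internal direct sum A ⊕ B of subgroups A and B, then A is s-irreducible. -/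
/-- A direct summand of an s-irreducible torsion-free abelian group is s-irreducible. -/
theorem statement12 {G : Type*} [AddCommGroup G] (htf : ∀ g : G, g ≠ 0 → ¬IsOfFinAddOrder g)
    (hirr : SIrreducible G) (A B : AddSubgroup G) (hcompl : IsCompl A B) :
    SIrreducible A := by
  intro H hpure hsi
  by_cases hH : H = ⊥
  · exact Or.inl hH
  right
  -- projection π : G →+ A along B
  have hc : IsCompl (AddSubgroup.toIntSubmodule A) (AddSubgroup.toIntSubmodule B) :=
    (AddSubgroup.toIntSubmodule (M := G)).isCompl hcompl
  set π₀ := Submodule.linearProjOfIsCompl _ _ hc with hπ₀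
  let π : G →+ A :=
    { toFun := fun g => ⟨(π₀ g : G), (π₀ g).2⟩
      map_zero' := by ext; simp
      map_add' := fun a b => by ext; simp }
  have hπA : ∀ x : A, π (x : G) = x := by
    intro x
    have := Submodule.linearProjOfIsCompl_apply_left hc
      (⟨(x : G), x.2⟩ : AddSubgroup.toIntSubmodule A)
    ext
    exact congrArg Subtype.val this
  -- H as a subgroup of G
  set H' : AddSubgroup G := H.map A.subtype with hH'
  set T : AddSubgroup G := homGenSub H' with hT
  -- the images of homs H' →+ G lie in T
  have hφT : ∀ (φ : H' →+ G) (x : H'), φ x ∈ T := by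
    intro φ x
    exact (le_iSup (fun φ : H' →+ G => φ.range) φ) ⟨x, rfl⟩
  have hH'T : H' ≤ T := by
    intro x hx
    have := hφT H'.subtype ⟨x, hx⟩
    simpa using this
  -- S : pure closure of T
  let S : AddSubgroup G :=
    { carrier := {g : G | ∃ n : ℕ, 0 < n ∧ n • g ∈ T}
      zero_mem' := ⟨1, one_pos, by simpa using T.zero_mem⟩
      add_mem' := by
        rintro a b ⟨n, hn, ha⟩ ⟨m, hm, hb⟩
        refine ⟨n * m, Nat.mul_pos hn hm, ?_⟩
        have ha' : (n * m) • a ∈ T := by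
          rw [mul_comm, mul_smul]; exact T.nsmul_mem ha m
        have hb' : (n * m) • b ∈ T := by
          rw [mul_smul]; exact T.nsmul_mem hb n
        rw [smul_add]
        exact T.add_mem ha' hb'
      neg_mem' := by
        rintro a ⟨n, hn, ha⟩
        exact ⟨n, hn, by simpa using T.neg_mem ha⟩ }
  have hTS : T ≤ S := fun t ht => ⟨1, one_pos, by simpa using ht⟩
  -- homs T →+ G preserve T
  have hTsi : ∀ (ρ : (T : AddSubgroup G) →+ G) (t : G) (ht : t ∈ T), ρ ⟨t, ht⟩ ∈ T := by
    intro ρ t ht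
    refine AddSubgroup.iSup_induction' (fun φ : H' →+ G => φ.range)
      (C := fun x hx => ρ ⟨x, hx⟩ ∈ T) ?_ ?_ ?_ ht
    · rintro φ x ⟨y, rfl⟩
      have : ρ ⟨φ y, hφT φ y⟩ = (ρ.comp (φ.codRestrict T (hφT φ))) y := rfl
      rw [this]
      exact hφT _ y
    · show ρ 0 ∈ T
      rw [map_zero]; exact T.zero_mem
    · intro x y hx hy hcx hcy
      show ρ (⟨x, hx⟩ + ⟨y, hy⟩) ∈ T
      rw [map_add]
      exact T.add_mem hcx hcy
  -- S is si in G
  have hSsi : IsStronglyInvariant S := by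
    intro ψ s
    obtain ⟨n, hn, hns⟩ := s.2
    refine ⟨n, hn, ?_⟩
    have key : ∀ (t : G) (ht : t ∈ T), ψ ⟨t, hTS ht⟩ ∈ T :=
      fun t ht => hTsi (ψ.comp (AddSubgroup.inclusion hTS)) t ht
    have h1 : n • (ψ s : G) = ψ (n • s) := (map_nsmul ψ n s).symm
    have h2 : (n • s : S) = ⟨n • (s : G), hTS hns⟩ := rfl
    rw [h1, h2]
    exact key _ hns
  -- S is pure
  have hSpure : IsPureSubgroup S := by
    intro n hn
    apply le_antisymm
    · intro x hx
      rw [AddSubgroup.mem_inf] at hx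
      obtain ⟨hxS, y, rfl⟩ := hx
      obtain ⟨m, hm, hmx⟩ := hxS
      refine ⟨y, ⟨m * n, Nat.mul_pos hm hn, ?_⟩, rfl⟩
      show (m * n) • y ∈ T
      rw [mul_smul]
      exact hmx
    · rintro x ⟨y, hy, rfl⟩
      obtain ⟨m, hm, hmy⟩ := hy
      rw [AddSubgroup.mem_inf]
      refine ⟨⟨m, hm, ?_⟩, y, rfl⟩
      show m • (n • y) ∈ T
      rw [smul_comm]
      exact T.nsmul_mem hmy n
  -- S ≠ ⊥
  have hSne : S ≠ ⊥ := by
    obtain ⟨a, hane⟩ := AddSubgroup.ne_bot_iff_exists_ne_zero.mp hH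
    intro hSbot
    have hmem : (((a : A) : G)) ∈ H' := ⟨(a : A), a.2, rfl⟩
    have : (((a : A) : G)) ∈ S := hTS (hH'T hmem)
    rw [hSbot, AddSubgroup.mem_bot] at this
    exact hane (Subtype.ext (Subtype.ext this))
  have hStop : S = ⊤ := (hirr S hSpure hSsi).resolve_left hSne
  -- π maps T into H
  have hπT : ∀ t ∈ T, π t ∈ H := by
    intro t ht
    refine AddSubgroup.iSup_induction (fun φ : H' →+ G => φ.range)
      (C := fun x => π x ∈ H) ht ?_ ?_ ?_
    · rintro φ x ⟨y, rfl⟩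
      obtain ⟨a, haH, hav⟩ := y.2
      let j : H →+ H' := (A.subtype.comp H.subtype).codRestrict H'
        (fun x => ⟨x.1, x.2, rfl⟩)
      have hjy : j ⟨a, haH⟩ = y := Subtype.ext hav
      have := hsi (π.comp (φ.comp j)) ⟨a, haH⟩
      simpa [hjy] using this
    · simp only [map_zero]; exact H.zero_mem
    · intro x y hx hy
      rw [map_add]; exact H.add_mem hx hy
  -- conclude H = ⊤
  ext x
  simp only [AddSubgroup.mem_top, iff_true]
  have hxS : (x : G) ∈ S := hStop ▸ AddSubgroup.mem_top _
  obtain ⟨n, hn, hnx⟩ := hxS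
  have h1 : π (n • (x : G)) ∈ H := hπT _ hnx
  have h2 : π (n • (x : G)) = n • x := by
    rw [map_nsmul, hπA]
  rw [h2] at h1
  -- purity of H in A
  have hp := hpure n hn
  have hmem : n • x ∈ H ⊓ (nsmulHom (G := A) n).range := by
    rw [AddSubgroup.mem_inf]
    exact ⟨h1, x, rfl⟩
  rw [hp] at hmem
  obtain ⟨h, hhH, hh⟩ := hmem
  have hh' : n • h = n • x := hh
  have hfin : h = x := by
    by_contra hne
    have hne'' : ((h : G) - (x : G)) ≠ 0 := by
      intro h0
      exact hne (Subtype.ext (sub_eq_zero.mp h0))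
    have hzero : n • ((h : G) - (x : G)) = 0 := by
      have := congrArg (Subtype.val) hh'
      push_cast at this
      rw [smul_sub, this, sub_self]
    exact htf _ hne''
      (isOfFinAddOrder_iff_nsmul_eq_zero.mpr ⟨n, hn, hzero⟩)
  exact hfin ▸ hhH
end

section
/- Let G be a torsion-free s-irreducible group which is an ISI-group but is not si-simple, and let H be a strongly invariant subgroup of G with {0} ≠ H ≠ G. Then H is itself s-irreducible (as a torsion-free group). -/
def satur {G : Type*} [AddCommGroup G] (A : AddSubgroup G) : AddSubgroup G where
  carrier := {g : G | ∃ n : ℕ, 0 < n ∧ n • g ∈ A}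
  zero_mem' := ⟨1, Nat.one_pos, by simpa using A.zero_mem⟩
  add_mem' := by
    rintro a b ⟨n, hn, ha⟩ ⟨k, hk, hb⟩
    refine ⟨n * k, Nat.mul_pos hn hk, ?_⟩
    rw [smul_add]
    refine AddSubgroup.add_mem _ ?_ ?_
    · rw [mul_comm, mul_smul]; exact AddSubgroup.nsmul_mem _ ha k
    · rw [mul_smul]; exact AddSubgroup.nsmul_mem _ hb n
  neg_mem' := by
    rintro a ⟨n, hn, ha⟩
    exact ⟨n, hn, by rw [smul_neg]; exact AddSubgroup.neg_mem _ ha⟩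

lemma mem_satur {G : Type*} [AddCommGroup G] {A : AddSubgroup G} {g : G} :
    g ∈ satur A ↔ ∃ n : ℕ, 0 < n ∧ n • g ∈ A := Iff.rfl

lemma le_satur {G : Type*} [AddCommGroup G] (A : AddSubgroup G) : A ≤ satur A :=
  fun g hg => ⟨1, Nat.one_pos, by simpa using hg⟩

lemma satur_pure {G : Type*} [AddCommGroup G] (A : AddSubgroup G) :
    IsPureSubgroup (satur A) := by
  intro n hn
  unfold IsNPure
  ext x
  simp only [AddSubgroup.mem_inf, AddMonoidHom.mem_range, AddSubgroup.mem_map]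
  constructor
  · rintro ⟨⟨k, hk, hkx⟩, ⟨g, hg⟩⟩
    have hg' : n • g = x := hg
    refine ⟨g, ⟨k * n, Nat.mul_pos hk hn, ?_⟩, hg⟩
    rw [mul_smul, hg']; exact hkx
  · rintro ⟨g, ⟨k, hk, hkg⟩, hg⟩
    have hg' : n • g = x := hg
    refine ⟨⟨k, hk, ?_⟩, ⟨g, hg⟩⟩
    rw [← hg', smul_comm]
    exact AddSubgroup.nsmul_mem _ hkg n

lemma satur_si {G : Type*} [AddCommGroup G] (A : AddSubgroup G)
    (h : ∀ (ψ : (satur A) →+ G) (t : satur A), (t : G) ∈ A → (ψ t : G) ∈ satur A) :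
    IsStronglyInvariant (satur A) := by
  intro ψ s
  obtain ⟨n, hn, hns⟩ := s.2
  have hmem : ((n • s : satur A) : G) ∈ A := by
    have : ((n • s : satur A) : G) = n • (s : G) := by simp
    rw [this]; exact hns
  obtain ⟨l, hl, hls⟩ := h ψ (n • s) hmem
  refine ⟨l * n, Nat.mul_pos hl hn, ?_⟩
  rw [mul_smul, ← map_nsmul]
  exact hls

/-- A non-trivial proper strongly invariant subgroup of a torsion-free s-irreducible
ISI-group which is not si-simple is itself s-irreducible. -/
theorem statement13 {G : Type*} [AddCommGroup G] (htf : AddMonoid.IsTorsionFree G)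
    (hirr : SIrreducible G) (hisi : IsISI G) (hns : ¬ SiSimple G)
    (H : AddSubgroup G) (hsi : IsStronglyInvariant H) (hne : H ≠ ⊥) (hpr : H ≠ ⊤) :
    SIrreducible H := by

  intro K hKpure hKsi
  by_cases hKbot : K = ⊥
  · exact Or.inl hKbot
  right
  -- Step 1: any two proper nontrivial si subgroups of G coincide
  have huniq : ∀ F₁ F₂ : AddSubgroup G, IsStronglyInvariant F₁ → IsStronglyInvariant F₂ →
      F₁ ≠ ⊥ → F₁ ≠ ⊤ → F₂ ≠ ⊥ → F₂ ≠ ⊤ → F₁ = F₂ := by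
    intro F₁ F₂ h1 h2 hb1 ht1 hb2 ht2
    obtain ⟨e⟩ := hisi.2 F₁ F₂ h1 h2 hb1 ht1 hb2 ht2
    apply le_antisymm
    · intro x hx
      have := h2 (F₁.subtype.comp e.symm.toAddMonoidHom) (e ⟨x, hx⟩)
      simpa using this
    · intro y hy
      have := h1 (F₂.subtype.comp e.toAddMonoidHom) (e.symm ⟨y, hy⟩)
      simpa using this
  -- comap subgroups G_m are strongly invariant
  have hGm_si : ∀ m : ℕ, IsStronglyInvariant (AddSubgroup.comap (nsmulHom (G := G) m) H) := by
    intro m ψ s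
    have hle : H ≤ AddSubgroup.comap (nsmulHom (G := G) m) H := by
      intro h hh
      show m • h ∈ H
      exact AddSubgroup.nsmul_mem _ hh m
    have hs : ((m • s : AddSubgroup.comap (nsmulHom (G := G) m) H) : G) ∈ H := by
      have : ((m • s : AddSubgroup.comap (nsmulHom (G := G) m) H) : G) = m • (s : G) := by simp
      rw [this]; exact s.2
    have h1 := hsi (ψ.comp (AddSubgroup.inclusion hle)) ⟨_, hs⟩
    have heq : (AddSubgroup.inclusion hle) (⟨_, hs⟩ : H) = m • s :=
      Subtype.ext rfl
    rw [AddMonoidHom.comp_apply, heq] at h1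
    rw [AddSubgroup.mem_comap]
    show m • (ψ s) ∈ H
    rw [← map_nsmul]
    exact h1
  -- Step 2+3: there is m > 0 with m • g ∈ H for all g
  have hstep3 : ∃ m : ℕ, 0 < m ∧ ∀ g : G, m • g ∈ H := by
    by_contra hcon
    push_neg at hcon
    -- saturation of H is pure and si, hence ⊤
    have hsat_si : IsStronglyInvariant (satur H) := by
      apply satur_si
      intro ψ t ht
      have h1 := hsi (ψ.comp (AddSubgroup.inclusion (le_satur H))) ⟨(t : G), ht⟩
      have heq : (AddSubgroup.inclusion (le_satur H)) (⟨(t : G), ht⟩ : H) = t :=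
        Subtype.ext rfl
      rw [AddMonoidHom.comp_apply, heq] at h1
      exact le_satur H h1
    have hsat_bot : satur H ≠ ⊥ := by
      intro hb
      exact hne (le_bot_iff.mp (hb ▸ le_satur H))
    have hsat_top : satur H = ⊤ := (hirr (satur H) (satur_pure H) hsat_si).resolve_left hsat_bot
    have htople : (⊤ : AddSubgroup G) ≤ H := by
      intro g _
      have hg : g ∈ satur H := hsat_top ▸ AddSubgroup.mem_top g
      obtain ⟨n, hn, hng⟩ := hg
      obtain ⟨g₀, hg₀⟩ := hcon n hn
      have hGmb : AddSubgroup.comap (nsmulHom (G := G) n) H ≠ ⊥ := by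
        intro hb
        refine hne (le_bot_iff.mp ?_)
        rw [← hb]
        intro h hh
        show n • h ∈ H
        exact AddSubgroup.nsmul_mem _ hh n
      have hGmt : AddSubgroup.comap (nsmulHom (G := G) n) H ≠ ⊤ := by
        intro ht
        exact hg₀ (ht ▸ AddSubgroup.mem_top g₀ : g₀ ∈ AddSubgroup.comap (nsmulHom (G := G) n) H)
      have := huniq _ _ (hGm_si n) hsi hGmb hGmt hne hpr
      rw [← this]
      exact hng
    exact hpr (top_le_iff.mp htople)
  obtain ⟨m, hm, hmG⟩ := hstep3
  -- the image of K in G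
  set KG := K.map H.subtype with hKG
  have hKGsub : ∀ x : K, ((x : H) : G) ∈ KG := by
    intro x
    exact ⟨(x : H), x.2, rfl⟩
  -- saturation of KG is strongly invariant
  have hP_si : IsStronglyInvariant (satur KG) := by
    apply satur_si
    intro ψ t ht
    -- inclusion of K into satur KG
    have hmemP : ∀ x : K, ((x : H) : G) ∈ satur KG := fun x => le_satur KG (hKGsub x)
    set ι : K →+ satur KG :=
      AddMonoidHom.codRestrict (H.subtype.comp K.subtype) _ hmemP with hι
    have hθmem : ∀ x : K, ((nsmulHom (G := G) m).comp (ψ.comp ι)) x ∈ H := by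
      intro x
      exact hmG _
    set θ : K →+ H :=
      AddMonoidHom.codRestrict ((nsmulHom (G := G) m).comp (ψ.comp ι)) _ hθmem with hθ
    obtain ⟨kH, hkK, hkeq⟩ := ht
    set x : K := ⟨kH, hkK⟩ with hx
    have hιx : ι x = t := by
      apply Subtype.ext
      exact hkeq
    have h2 := hKsi θ x
    refine ⟨m, hm, ?_⟩
    have hval : ((θ x : H) : G) = m • (ψ t : G) := by
      have : ((θ x : H) : G) = ((nsmulHom (G := G) m).comp (ψ.comp ι)) x := rfl
      rw [this, AddMonoidHom.comp_apply, AddMonoidHom.comp_apply, hιx]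
      rfl
    rw [← hval]
    exact ⟨θ x, h2, rfl⟩
  -- satur KG ≠ ⊥
  have hP_bot : satur KG ≠ ⊥ := by
    intro hb
    apply hKbot
    rw [AddSubgroup.eq_bot_iff_forall]
    intro x hx
    have h1 : ((⟨x, hx⟩ : K) : H) = x := rfl
    have h2 : ((x : H) : G) ∈ satur KG := le_satur KG ⟨x, hx, rfl⟩
    rw [hb, AddSubgroup.mem_bot] at h2
    have : (x : G) = ((0 : H) : G) := by simpa using h2
    exact Subtype.ext this
  have hP_top : satur KG = ⊤ := (hirr (satur KG) (satur_pure KG) hP_si).resolve_left hP_bot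
  -- conclude K = ⊤ using purity
  rw [AddSubgroup.eq_top_iff']
  intro h
  have hg : (h : G) ∈ satur KG := hP_top ▸ AddSubgroup.mem_top (h : G)
  obtain ⟨n, hn, hnh⟩ := hg
  obtain ⟨k, hkK, hkeq⟩ := hnh
  have hkn : k = n • h := by
    apply Subtype.ext
    have : (k : G) = n • (h : G) := hkeq
    simpa using this
  have hmem : n • h ∈ K ⊓ (nsmulHom (G := H) n).range := by
    constructor
    · rw [← hkn]; exact hkK
    · exact ⟨h, rfl⟩
  rw [hKpure n hn] at hmem
  obtain ⟨k', hk', hk'eq⟩ := hmem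
  have hk'eq' : n • k' = n • h := hk'eq
  have hzero : n • ((k' : G) - (h : G)) = 0 := by
    rw [smul_sub]
    have : n • (k' : G) = n • (h : G) := by
      have := congrArg (fun z : H => (z : G)) hk'eq'
      simpa using this
    rw [this, sub_self]
  have hdz : (k' : G) - (h : G) = 0 := by
    by_contra hne0
    exact htf _ hne0 (isOfFinAddOrder_iff_nsmul_eq_zero.mpr ⟨n, hn, hzero⟩)
  have : k' = h := by
    apply Subtype.ext
    have := sub_eq_zero.mp hdz
    exact this
  rw [← this]
  exact hk'
end

section
/- Let G be the internal direct sum of a family (A_i)_{i ∈ I} of s-irreducible torsion-free subgroups. Then every pure strongly invariant subgroup H of G is of the form H = ⊕_{j ∈ J} A_j for some subset J ⊆ I; in particular, every pure strongly invariant subgroup of G is a fully invariant direct summand of G. -/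
/-- A pure strongly invariant subgroup of an internal direct sum of s-irreducible
torsion-free subgroups is the (internal) direct sum of some subfamily; in particular it is a
fully invariant direct summand. -/
theorem statement14 {G : Type*} [AddCommGroup G] {ι : Type*} (A : ι → AddSubgroup G)
    (hind : iSupIndep A) (hsup : ⨆ i, A i = ⊤)
    (htf : ∀ i, ∀ g : A i, g ≠ 0 → ¬IsOfFinAddOrder g) (hirr : ∀ i, SIrreducible (A i))
    (H : AddSubgroup G) (hpure : IsPureSubgroup H) (hsi : IsStronglyInvariant H) :
    (∃ J : Set ι, H = ⨆ j ∈ J, A j) ∧ IsFullyInvariant H ∧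
      ∃ K : AddSubgroup G, IsCompl H K := by
    classical
  -- `H` is fully invariant: restrict any endomorphism of `G` to `H`.
  have hHfi : IsFullyInvariant H := fun φ x hx => hsi (φ.comp H.subtype) ⟨x, hx⟩
  -- Pass to ℤ-submodules to use the direct sum API.
  set S : ι → Submodule ℤ G := fun i => AddSubgroup.toIntSubmodule (A i) with hSdef
  have hindS : iSupIndep S := hind.map_orderIso AddSubgroup.toIntSubmodule
  have hsupS : ⨆ i, S i = ⊤ := by
    have := congrArg AddSubgroup.toIntSubmodule hsup
    rwa [OrderIso.map_iSup, OrderIso.map_top] at this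
  have hInt : DirectSum.IsInternal S :=
    (DirectSum.isInternal_submodule_iff_iSupIndep_and_iSup_eq_top S).2 ⟨hindS, hsupS⟩
  set e := LinearEquiv.ofBijective (DirectSum.coeLinearMap S) hInt with hedef
  -- The projections onto the components.
  set π : ι → G →+ G := fun i => AddMonoidHom.mk' (fun x => ((e.symm x) i : G))
    (fun a b => by
      show ((e.symm (a + b)) i : G) = ((e.symm a) i : G) + ((e.symm b) i : G)
      rw [map_add, DirectSum.add_apply, Submodule.coe_add]) with hπdef
  have hπmem : ∀ i (x : G), π i x ∈ A i := fun i x => ((e.symm x) i).2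
  have hπself : ∀ i (x : G), x ∈ A i → π i x = x := by
    intro i x hx
    have hx' : x ∈ S i := hx
    show ((e.symm x) i : G) = x
    rw [hInt.ofBijective_coeLinearMap_of_mem hx']
  have hπne : ∀ i j (x : G), x ∈ A i → i ≠ j → π j x = 0 := by
    intro i j x hx hij
    have hx' : x ∈ S i := hx
    show ((e.symm x) j : G) = 0
    rw [hInt.ofBijective_coeLinearMap_of_mem_ne hij hx', ZeroMemClass.coe_zero]
  have hsum : ∀ x : G, ∑ i ∈ (e.symm x).support, π i x = x := by
    intro x
    have h1 : ∑ i ∈ (e.symm x).support,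
        DirectSum.of (fun i => S i) i ((e.symm x) i) = e.symm x :=
      DirectSum.sum_support_of _
    calc ∑ i ∈ (e.symm x).support, π i x
        = e (∑ i ∈ (e.symm x).support, DirectSum.of (fun i => S i) i ((e.symm x) i)) := by
          rw [map_sum]
          refine Finset.sum_congr rfl fun i _ => ?_
          show ((e.symm x) i : G) = e (DirectSum.of (fun i => S i) i ((e.symm x) i))
          rw [hedef]; exact (DirectSum.coeLinearMap_of ..).symm
      _ = x := by rw [h1, e.apply_symm_apply]
  have hπH : ∀ i (x : G), x ∈ H → π i x ∈ H := fun i x hx => hHfi (π i) x hx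
  -- The trace of `H` on each component is pure and strongly invariant there.
  have hBsi : ∀ i, IsStronglyInvariant (H.addSubgroupOf (A i)) := by
    intro i ψ s
    set f : ↥H →+ ↥(H.addSubgroupOf (A i)) :=
      AddMonoidHom.mk' (fun h => ⟨⟨π i (h : G), hπmem i (h : G)⟩,
        (AddSubgroup.mem_addSubgroupOf).2 (hπH i (h : G) h.2)⟩)
        (fun a b => by ext; exact map_add (π i) _ _) with hfdef
    have hsH : ((s : ↥(A i)) : G) ∈ H := (AddSubgroup.mem_addSubgroupOf).1 s.2
    have key := hsi (((A i).subtype).comp (ψ.comp f)) ⟨((s : ↥(A i)) : G), hsH⟩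
    have hfs : f ⟨((s : ↥(A i)) : G), hsH⟩ = s := by
      ext
      exact hπself i _ (s : ↥(A i)).2
    rw [AddMonoidHom.comp_apply, AddMonoidHom.comp_apply, hfs] at key
    exact (AddSubgroup.mem_addSubgroupOf).2 key
  have hBpure : ∀ i, IsPureSubgroup (H.addSubgroupOf (A i)) := by
    intro i n hn
    refine le_antisymm ?_ ?_
    · rintro a ⟨haB, b, hb⟩
      have hab : n • (b : G) = (a : G) := by
        have := Subtype.ext_iff.1 hb
        simpa [nsmulHom] using this
      have hmem : (a : G) ∈ H ⊓ (nsmulHom (G := G) n).range :=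
        ⟨(AddSubgroup.mem_addSubgroupOf).1 haB, ⟨(b : G), hab⟩⟩
      rw [hpure n hn] at hmem
      obtain ⟨h, hhH, hha⟩ := hmem
      have hha' : n • h = (a : G) := hha
      have hC : n • π i h = (a : G) := by
        rw [← map_nsmul (π i) n h, hha', hπself i _ a.2]
      refine ⟨⟨π i h, hπmem i h⟩, (AddSubgroup.mem_addSubgroupOf).2 (hπH i h hhH), ?_⟩
      ext
      exact hC
    · rintro a ⟨b, hbB, rfl⟩
      exact ⟨nsmul_mem hbB n, ⟨b, rfl⟩⟩
  have hcases : ∀ i, H.addSubgroupOf (A i) = ⊥ ∨ H.addSubgroupOf (A i) = ⊤ :=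
    fun i => hirr i _ (hBpure i) (hBsi i)
  -- The decisive dichotomy on components.
  have hbot : ∀ i, ¬ (A i ≤ H) → ∀ x : G, x ∈ H → π i x = 0 := by
    intro i hi x hx
    rcases hcases i with hB | hB
    · have : (⟨π i x, hπmem i x⟩ : ↥(A i)) ∈ H.addSubgroupOf (A i) :=
        (AddSubgroup.mem_addSubgroupOf).2 (hπH i x hx)
      rw [hB, AddSubgroup.mem_bot] at this
      simpa using Subtype.ext_iff.1 this
    · exact absurd ((AddSubgroup.addSubgroupOf_eq_top).1 hB) hi
  set J : Set ι := {i | A i ≤ H} with hJdef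
  have hHeq : H = ⨆ j ∈ J, A j := by
    refine le_antisymm ?_ (iSup₂_le fun j hj => hj)
    intro x hx
    rw [← hsum x]
    refine AddSubgroup.sum_mem _ fun i _ => ?_
    by_cases hiJ : A i ≤ H
    · exact le_iSup₂ (f := fun j (_ : j ∈ J) => A j) i hiJ (hπmem i x)
    · rw [hbot i hiJ x hx]
      exact zero_mem _
  refine ⟨⟨J, hHeq⟩, hHfi, ⟨⨆ j ∈ Jᶜ, A j, ?_, ?_⟩⟩
  · -- disjointness
    rw [disjoint_iff, eq_bot_iff]
    rintro x ⟨hxH, hxK⟩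
    have hker : (⨆ j ∈ Jᶜ, A j) ≤ ⨅ (i) (_ : i ∈ J), (π i).ker := by
      refine iSup₂_le fun j hj => le_iInf₂ fun i hi => fun y hy => ?_
      exact AddMonoidHom.mem_ker.2 (hπne j i y hy (fun h => hj (h ▸ hi)))
    rw [AddSubgroup.mem_bot, ← hsum x]
    refine Finset.sum_eq_zero fun i _ => ?_
    by_cases hiJ : i ∈ J
    · exact AddMonoidHom.mem_ker.1 (AddSubgroup.mem_iInf.1
        ((AddSubgroup.mem_iInf.1 (hker hxK)) i) hiJ)
    · exact hbot i hiJ x hxH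
  · -- codisjointness
    rw [codisjoint_iff, eq_top_iff, ← hsup]
    refine iSup_le fun i => ?_
    by_cases hiJ : i ∈ J
    · exact le_sup_of_le_left (hHeq ▸ le_iSup₂ (f := fun j (_ : j ∈ J) => A j) i hiJ)
    · exact le_sup_of_le_right (le_iSup₂ (f := fun j (_ : j ∈ Jᶜ) => A j) i hiJ)
end
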